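/- arXiv:1312.0327 — 7 statements merged into one kernel-verified Lean document; each statement's English description precedes it below -/
import Mathlib

section
/- Let I be a monomial ideal of S of Borel type. Then the integral closure Ī of I is again a monomial ideal of Borel type. -/
open MvPolynomial

/-- An ideal of `K[x_1, …, x_n]` is a monomial ideal if it is generated by monomials. -/
def IsMonomialIdeal {K : Type*} [Field K] {n : ℕ} (I : Ideal (MvPolynomial (Fin n) K)) : Prop :=
  ∃ G : Set (Fin n →₀ ℕ),
    I = Ideal.span ((fun a => (monomial a (1 : K) : MvPolynomial (Fin n) K)) '' G)

/-- A monomial ideal `I` is of Borel type if for every monomial `u ∈ I` and all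
`i < j`, `s ≥ 1` with `x_j ^ s ∣ u`, there is `t ≥ 0` with `x_i ^ t * (u / x_j ^ s) ∈ I`. -/
def IsBorelType {K : Type*} [Field K] {n : ℕ} (I : Ideal (MvPolynomial (Fin n) K)) : Prop :=
  ∀ a : Fin n →₀ ℕ, (monomial a (1 : K) : MvPolynomial (Fin n) K) ∈ I →
    ∀ i j : Fin n, i < j → ∀ s : ℕ, 1 ≤ s → s ≤ a j →
      ∃ t : ℕ,
        (monomial (a - Finsupp.single j s + Finsupp.single i t) (1 : K) :
          MvPolynomial (Fin n) K) ∈ I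

/-- The integral closure of a monomial ideal `I`: the ideal generated by all
monomials `u` such that `u ^ k ∈ I ^ k` for some integer `k ≥ 1`. -/
noncomputable def monomialIntegralClosure {K : Type*} [Field K] {n : ℕ}
    (I : Ideal (MvPolynomial (Fin n) K)) : Ideal (MvPolynomial (Fin n) K) :=
  Ideal.span {m | ∃ a : Fin n →₀ ℕ, m = (monomial a (1 : K) : MvPolynomial (Fin n) K) ∧
    ∃ k : ℕ, 1 ≤ k ∧ m ^ k ∈ I ^ k}

/-!
A monomial `x^a` lies in the integral closure iff `k • a` dominates a sum of `k` exponents of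
monomials of `I`, for some `k ≥ 1`. Since `I` is of Borel type, each summand may drop its whole
`x_j`-part in exchange for a power `x_i ^ t_l` and stay in `I`; the new sum is then dominated by
`k • (a - s e_j + T e_i)` with `T = ∑ t_l`, so `x^(a - s e_j + T e_i)` is again integral over `I`.
-/

open Pointwise

section MonomialIdeal

variable {σ R : Type*} [CommSemiring R]

theorem monomial_one_mem_of_le {J : Ideal (MvPolynomial σ R)} {a b : σ →₀ ℕ} (hba : b ≤ a)
    (hb : monomial b (1 : R) ∈ J) : monomial a (1 : R) ∈ J :=
  Ideal.mem_of_dvd _ (monomial_dvd_monomial.2 ⟨Or.inr hba, dvd_rfl⟩) hb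

theorem monomial_one_mem_span_image_iff [Nontrivial R] {E : Set (σ →₀ ℕ)} {a : σ →₀ ℕ} :
    monomial a (1 : R) ∈ Ideal.span ((fun b => monomial b (1 : R)) '' E) ↔ ∃ b ∈ E, b ≤ a := by
  classical
  rw [mem_ideal_span_monomial_image, support_monomial, if_neg one_ne_zero]
  simp

theorem monomial_one_image_add (A B : Set (σ →₀ ℕ)) :
    (fun b => monomial b (1 : R)) '' (A + B) =
      (fun b => monomial b (1 : R)) '' A * (fun b => monomial b (1 : R)) '' B := by
  rw [← Set.image2_add, ← Set.image2_mul, Set.image_image2, Set.image2_image_left,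
    Set.image2_image_right]
  simp only [monomial_mul, mul_one]

theorem span_monomial_one_image_pow (E : Set (σ →₀ ℕ)) (k : ℕ) :
    Ideal.span ((fun b => monomial b (1 : R)) '' E) ^ k =
      Ideal.span ((fun b => monomial b (1 : R)) '' (k • E)) := by
  induction k with
  | zero => simp [monomial_zero']
  | succ k ih =>
    rw [pow_succ, ih, succ_nsmul, Ideal.span_mul_span', monomial_one_image_add]

def monomialExponents (I : Ideal (MvPolynomial σ R)) : Set (σ →₀ ℕ) :=
  {a | monomial a (1 : R) ∈ I}

end MonomialIdeal

section BorelStable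

variable {σ : Type*}

def BorelStable (E : Set (σ →₀ ℕ)) (i j : σ) : Prop :=
  ∀ b ∈ E, ∃ t, b.erase j + Finsupp.single i t ∈ E

theorem BorelStable.add {A B : Set (σ →₀ ℕ)} {i j : σ} (hA : BorelStable A i j)
    (hB : BorelStable B i j) : BorelStable (A + B) i j := by
  rintro _ ⟨a, ha, b, hb, rfl⟩
  obtain ⟨t, ht⟩ := hA a ha
  obtain ⟨u, hu⟩ := hB b hb
  refine ⟨t + u, ?_⟩
  convert Set.add_mem_add ht hu using 1
  rw [Finsupp.erase_add, Finsupp.single_add]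
  abel

theorem BorelStable.nsmul {E : Set (σ →₀ ℕ)} {i j : σ} (hE : BorelStable E i j) (k : ℕ) :
    BorelStable (k • E) i j := by
  induction k with
  | zero =>
    rintro b rfl
    exact ⟨0, by simp⟩
  | succ k ih => rw [succ_nsmul]; exact ih.add hE

theorem erase_add_single_le_nsmul {a b : σ →₀ ℕ} {k : ℕ} (hk : 1 ≤ k) (hb : b ≤ k • a)
    (i j : σ) (s t : ℕ) :
    b.erase j + Finsupp.single i t ≤ k • (a - Finsupp.single j s + Finsupp.single i t) := by
  rw [smul_add]
  refine add_le_add (fun x => ?_) (fun x => ?_)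
  · rcases eq_or_ne x j with rfl | hx
    · simp
    · simpa [Finsupp.erase_ne hx, Finsupp.single_eq_of_ne hx] using hb x
  · rw [Finsupp.smul_apply, smul_eq_mul]
    exact Nat.le_mul_of_pos_left _ hk

end BorelStable

section BorelType

variable {K : Type*} [Field K] {n : ℕ}

theorem IsMonomialIdeal.eq_span_monomialExponents {I : Ideal (MvPolynomial (Fin n) K)}
    (hI : IsMonomialIdeal I) :
    I = Ideal.span ((fun a => monomial a (1 : K)) '' monomialExponents I) := by
  obtain ⟨G, rfl⟩ := hI
  refine le_antisymm (Ideal.span_mono (Set.image_mono fun a ha => ?_)) ?_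
  · exact Ideal.subset_span ⟨a, ha, rfl⟩
  · rw [Ideal.span_le]
    rintro _ ⟨a, ha, rfl⟩
    exact ha

theorem IsMonomialIdeal.monomial_mem_pow_iff {I : Ideal (MvPolynomial (Fin n) K)}
    (hI : IsMonomialIdeal I) {a : Fin n →₀ ℕ} {k : ℕ} :
    monomial a (1 : K) ∈ I ^ k ↔ ∃ b ∈ k • monomialExponents I, b ≤ a := by
  conv_lhs => rw [hI.eq_span_monomialExponents]
  rw [span_monomial_one_image_pow, monomial_one_mem_span_image_iff]

theorem IsBorelType.borelStable {I : Ideal (MvPolynomial (Fin n) K)} (hBT : IsBorelType I)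
    {i j : Fin n} (hij : i < j) : BorelStable (monomialExponents I) i j := by
  intro b hb
  by_cases hbj : b j = 0
  · exact ⟨0, by simpa [Finsupp.erase_of_notMem_support, hbj] using hb⟩
  · obtain ⟨t, ht⟩ := hBT b hb i j hij (b j) (Nat.one_le_iff_ne_zero.2 hbj) le_rfl
    refine ⟨t, ?_⟩
    rwa [eq_tsub_of_add_eq (Finsupp.erase_add_single j b)]

theorem monomialIntegralClosure_eq_span (I : Ideal (MvPolynomial (Fin n) K)) :
    monomialIntegralClosure I = Ideal.span ((fun a => monomial a (1 : K)) ''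
      {a | ∃ k, 1 ≤ k ∧ monomial (k • a) (1 : K) ∈ I ^ k}) := by
  rw [monomialIntegralClosure]
  congr 1
  ext m
  constructor
  · rintro ⟨a, rfl, hk⟩
    simp only [monomial_pow, one_pow] at hk
    exact ⟨a, hk, rfl⟩
  · rintro ⟨a, hk, rfl⟩
    refine ⟨a, rfl, ?_⟩
    simp only [monomial_pow, one_pow]
    exact hk

theorem isMonomialIdeal_monomialIntegralClosure (I : Ideal (MvPolynomial (Fin n) K)) :
    IsMonomialIdeal (monomialIntegralClosure I) :=
  ⟨_, monomialIntegralClosure_eq_span I⟩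

theorem monomial_mem_monomialIntegralClosure_iff {I : Ideal (MvPolynomial (Fin n) K)}
    {a : Fin n →₀ ℕ} :
    monomial a (1 : K) ∈ monomialIntegralClosure I ↔
      ∃ k, 1 ≤ k ∧ monomial (k • a) (1 : K) ∈ I ^ k := by
  rw [monomialIntegralClosure_eq_span, monomial_one_mem_span_image_iff]
  constructor
  · rintro ⟨b, ⟨k, hk, hb⟩, hba⟩
    exact ⟨k, hk, monomial_one_mem_of_le (nsmul_le_nsmul_right hba k) hb⟩
  · rintro ⟨k, hk, ha⟩
    exact ⟨a, ⟨k, hk, ha⟩, le_rfl⟩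

theorem IsBorelType.monomialIntegralClosure {I : Ideal (MvPolynomial (Fin n) K)}
    (hmon : IsMonomialIdeal I) (hBT : IsBorelType I) :
    IsBorelType (monomialIntegralClosure I) := by
  intro a ha i j hij s _ _
  obtain ⟨k, hk, hka⟩ := monomial_mem_monomialIntegralClosure_iff.1 ha
  obtain ⟨b, hb, hba⟩ := hmon.monomial_mem_pow_iff.1 hka
  obtain ⟨t, ht⟩ := (hBT.borelStable hij).nsmul k b hb
  refine ⟨t, monomial_mem_monomialIntegralClosure_iff.2 ⟨k, hk, ?_⟩⟩
  exact hmon.monomial_mem_pow_iff.2 ⟨_, ht, erase_add_single_le_nsmul hk hba i j s t⟩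

end BorelType

/-- If `I` is a monomial ideal of Borel type, then its integral closure is again a
monomial ideal of Borel type. -/
theorem integralClosure_borelType {K : Type*} [Field K] {n : ℕ}
    (I : Ideal (MvPolynomial (Fin n) K)) (hmon : IsMonomialIdeal I) (hBT : IsBorelType I) :
    IsMonomialIdeal (monomialIntegralClosure I) ∧ IsBorelType (monomialIntegralClosure I) :=
  ⟨isMonomialIdeal_monomialIntegralClosure I, hBT.monomialIntegralClosure hmon⟩
end

section
/- Let I be a monomial ideal of S of Borel type and let P be a monomial prime ideal of S. Then J(I,P) is a monomial ideal of Borel type. -/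
/-!
Write `I = (x^a : a ∈ G)` and let `a_B` be the part of `a` in the variables indexed by `B`. Then
`J(I, P_B)` is the monomial ideal `J` generated by the `x^{a_B}`: `x^{a_B} · x^{a - a_B} ∈ I` with
`x^{a - a_B} ∉ P_B`, and conversely `f g ∈ J`, `g ∉ P_B` force `f ∈ J`. For the latter, grade `S` by
degree in the `B`-variables and drop from `f` its terms lying in `J`. The lowest component of `f g`
is then the product of the lowest component of `f` and the degree-zero component of `g`, which is
nonzero as `g ∉ P_B`; its monomials are outside `J`, being monomials of `f` times monomials in the
other variables, yet inside `J`, so `f = 0`. Borel type passes from `I` to `J` because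
`x^c ∈ J` iff `x^{c + v} ∈ I` for some `v` supported off `B`, and a Borel move on `c` does not
touch `v`.
-/

open MvPolynomial

/-- The monomial prime ideal `P_B = ⟨x_i : i ∈ B⟩`. -/
noncomputable def monomialPrime (K : Type*) [Field K] {n : ℕ} (B : Finset (Fin n)) :
    Ideal (MvPolynomial (Fin n) K) :=
  Ideal.span ((fun i => (X i : MvPolynomial (Fin n) K)) '' ↑B)

/-- `J(I, P) = {f : f * g ∈ I for some g ∉ P}`, the kernel of `S → (S/I)_P`, as a set. -/
def JSet {K : Type*} [Field K] {n : ℕ} (I P : Ideal (MvPolynomial (Fin n) K)) :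
    Set (MvPolynomial (Fin n) K) :=
  {f | ∃ g, g ∉ P ∧ f * g ∈ I}

theorem exists_notMem_mul_mem_iff_mem_comap_map {A : Type*} [CommRing A] (I P : Ideal A)
    [P.IsPrime] (f : A) :
    (∃ g ∉ P, f * g ∈ I) ↔
      f ∈ (I.map (algebraMap A (Localization.AtPrime P))).comap (algebraMap A _) := by
  rw [Ideal.mem_comap, IsLocalization.algebraMap_mem_map_algebraMap_iff P.primeCompl]
  simp only [mul_comm f]
  rfl

theorem Finsupp.weight_indicator_eq_zero_iff {σ : Type*} (B : Set σ) (d : σ →₀ ℕ) :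
    Finsupp.weight (B.indicator 1) d = 0 ↔ ∀ i ∈ B, d i = 0 := by
  classical
  simp only [Finsupp.weight_apply, Finsupp.sum, smul_eq_mul, Finset.sum_eq_zero_iff,
    Finsupp.mem_support_iff, mul_eq_zero, Set.indicator_apply, Pi.one_apply]
  exact forall_congr' fun i => by by_cases hi : i ∈ B <;> simp [hi]

namespace MvPolynomial

variable {σ R : Type*}

section WeightedGrading

variable [CommSemiring R] (w : σ → ℕ)

noncomputable def weightedGrading : MvPolynomial σ R →ₐ[R] Polynomial (MvPolynomial σ R) :=
  aeval fun i => Polynomial.monomial (w i) (X i)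

theorem weightedGrading_monomial (d : σ →₀ ℕ) (r : R) :
    weightedGrading w (monomial d r) =
      Polynomial.monomial (Finsupp.weight w d) (monomial d r) := by
  induction d using Finsupp.induction generalizing r with
  | zero => simp [weightedGrading, Polynomial.monomial_zero_left]
  | single_add i k d hi hk ih =>
    rw [monomial_single_add, map_mul, ih, map_pow, weightedGrading, aeval_X,
      Polynomial.monomial_pow, Polynomial.monomial_mul_monomial, map_add, Finsupp.weight_single,
      smul_eq_mul, mul_comm k, X_pow_eq_monomial, monomial_mul, one_mul,
      add_comm (Finsupp.single i k)]

theorem coeff_weightedGrading (f : MvPolynomial σ R) (k : ℕ) :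
    (weightedGrading w f).coeff k = weightedHomogeneousComponent w k f := by
  induction f using MvPolynomial.induction_on' with
  | monomial d r =>
    rw [weightedGrading_monomial, Polynomial.coeff_monomial]
    split_ifs with h
    · rw [weightedHomogeneousComponent_eq_self (isWeightedHomogeneous_monomial w d r h)]
    · exact ((isWeightedHomogeneous_monomial w d r rfl).weightedHomogeneousComponent_ne k
        (Ne.symm h)).symm
  | add p q hp hq => rw [map_add, Polynomial.coeff_add, hp, hq, map_add]

theorem eval_one_weightedGrading (f : MvPolynomial σ R) : (weightedGrading w f).eval 1 = f := by
  induction f using MvPolynomial.induction_on' with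
  | monomial d r => simp [weightedGrading_monomial]
  | add p q hp hq => rw [map_add, Polynomial.eval_add, hp, hq]

theorem weightedGrading_injective :
    Function.Injective (weightedGrading (R := R) (σ := σ) w) :=
  Function.LeftInverse.injective (eval_one_weightedGrading w)

theorem support_coeff_weightedGrading_subset (f : MvPolynomial σ R) (k : ℕ) :
    ((weightedGrading w f).coeff k).support ⊆ f.support := by
  classical
  rw [coeff_weightedGrading, support_weightedHomogeneousComponent]
  exact Finset.filter_subset _ _

theorem weight_of_mem_support_coeff_weightedGrading {f : MvPolynomial σ R} {k : ℕ}
    {d : σ →₀ ℕ} (hd : d ∈ ((weightedGrading w f).coeff k).support) :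
    Finsupp.weight w d = k := by
  classical
  rw [coeff_weightedGrading, support_weightedHomogeneousComponent] at hd
  exact (Finset.mem_filter.mp hd).2

end WeightedGrading

section SpanXImage

variable [CommSemiring R] (B : Set σ)

theorem mem_span_X_image_iff_coeff_zero_weightedGrading {g : MvPolynomial σ R} :
    g ∈ Ideal.span (X '' B) ↔ (weightedGrading (B.indicator 1) g).coeff 0 = 0 := by
  classical
  rw [mem_ideal_span_X_image, coeff_weightedGrading, ← support_eq_empty,
    support_weightedHomogeneousComponent, Finset.filter_eq_empty_iff]
  simp [Finsupp.weight_indicator_eq_zero_iff]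

theorem span_X_image_eq_ker :
    Ideal.span (X '' B) =
      RingHom.ker
        (Polynomial.constantCoeff.comp (weightedGrading (R := R) (B.indicator 1)).toRingHom) := by
  ext g
  simp [mem_span_X_image_iff_coeff_zero_weightedGrading]

end SpanXImage

theorem isPrime_span_X_image [CommRing R] [IsDomain R] (B : Set σ) :
    (Ideal.span (X '' B) : Ideal (MvPolynomial σ R)).IsPrime := by
  rw [span_X_image_eq_ker]
  exact RingHom.ker_isPrime _

theorem restrictSupport_sup_restrictSupport_compl [CommSemiring R] (s : Set (σ →₀ ℕ)) :
    restrictSupport R s ⊔ restrictSupport R sᶜ = ⊤ := by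
  rw [eq_top_iff, ← restrictSupport_univ, restrictSupport_eq_span, Submodule.span_le]
  rintro _ ⟨d, -, rfl⟩
  by_cases hd : d ∈ s
  · exact Submodule.mem_sup_left (by simp [hd])
  · exact Submodule.mem_sup_right (by simp [hd])

theorem mem_restrictSupportIdeal_of_mul_mem [CommRing R] [IsDomain R] {U : Set (σ →₀ ℕ)}
    (hU : IsUpperSet U) {B : Set σ} (hUB : ∀ b e, (∀ i ∈ B, e i = 0) → b + e ∈ U → b ∈ U)
    {f g : MvPolynomial σ R} (hfg : f * g ∈ restrictSupportIdeal R U hU)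
    (hg : g ∉ Ideal.span (X '' B)) : f ∈ restrictSupportIdeal R U hU := by
  classical
  obtain ⟨p, hp, q, hq, rfl⟩ : ∃ p ∈ restrictSupport R U, ∃ q ∈ restrictSupport R Uᶜ, p + q = f :=
    Submodule.mem_sup.mp
      (restrictSupport_sup_restrictSupport_compl (R := R) U ▸ Submodule.mem_top)
  have hpJ : p ∈ restrictSupportIdeal R U hU := hp
  have hqg : q * g ∈ restrictSupportIdeal R U hU := by
    simpa [add_mul] using sub_mem hfg (Ideal.mul_mem_right g _ hpJ)
  suffices q = 0 by simpa [this] using hpJ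
  by_contra hq0
  set φ := weightedGrading (R := R) (B.indicator 1)
  have hg0 : (φ g).coeff 0 ≠ 0 := (mem_span_X_image_iff_coeff_zero_weightedGrading B).not.mp hg
  have hφq : φ q ≠ 0 := (map_ne_zero_iff _ (weightedGrading_injective _)).mpr hq0
  have htrail : (φ (q * g)).trailingCoeff = (φ q).trailingCoeff * (φ g).coeff 0 := by
    rw [map_mul, Polynomial.trailingCoeff_mul, Polynomial.trailingCoeff_eq_coeff_zero hg0]
  have hin : ↑((φ (q * g)).trailingCoeff).support ⊆ U :=
    (Finset.coe_subset.mpr (support_coeff_weightedGrading_subset _ _ _)).trans hqg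
  have hout : ↑((φ q).trailingCoeff * (φ g).coeff 0).support ⊆ Uᶜ := by
    intro d hd
    obtain ⟨b, hb, e, he, rfl⟩ := Finset.mem_add.mp (support_mul _ _ hd)
    have hbU : b ∉ U := hq (support_coeff_weightedGrading_subset _ _ _ hb)
    have he0 : ∀ i ∈ B, e i = 0 :=
      (Finsupp.weight_indicator_eq_zero_iff B e).mp
        (weight_of_mem_support_coeff_weightedGrading _ he)
    exact fun hbe => hbU (hUB b e he0 hbe)
  have hzero : (φ q).trailingCoeff * (φ g).coeff 0 = 0 := by
    rw [← support_eq_empty, ← Finset.coe_eq_empty, ← Set.subset_empty_iff]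
    have := Set.subset_inter (htrail ▸ hin) hout
    rwa [Set.inter_compl_self] at this
  exact mul_ne_zero (Polynomial.trailingCoeff_nonzero_iff_nonzero.mpr hφq) hg0 hzero

theorem span_monomial_eq_restrictSupportIdeal [CommSemiring R] (G : Set (σ →₀ ℕ)) :
    Ideal.span ((monomial · (1 : R)) '' G) =
      restrictSupportIdeal R (upperClosure G) (upperClosure G).upper := by
  ext p
  rw [mem_ideal_span_monomial_image]
  rfl

theorem monomial_one_mem_span_monomial_iff [CommSemiring R] [Nontrivial R] {G : Set (σ →₀ ℕ)}
    {c : σ →₀ ℕ} :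
    monomial c (1 : R) ∈ Ideal.span ((monomial · (1 : R)) '' G) ↔ ∃ a ∈ G, a ≤ c := by
  classical
  rw [mem_ideal_span_monomial_image, support_monomial, if_neg one_ne_zero]
  simp

section FilterMem

variable (B : Set σ) [DecidablePred (· ∈ B)] (G : Set (σ →₀ ℕ))

theorem monomial_one_mem_span_filter_iff [CommSemiring R] [Nontrivial R] (c : σ →₀ ℕ) :
    monomial c (1 : R) ∈ Ideal.span ((monomial · (1 : R)) '' (Finsupp.filter (· ∈ B) '' G)) ↔
      ∃ v : σ →₀ ℕ, (∀ i ∈ B, v i = 0) ∧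
        monomial (c + v) (1 : R) ∈ Ideal.span ((monomial · (1 : R)) '' G) := by
  simp only [monomial_one_mem_span_monomial_iff, Set.exists_mem_image]
  constructor
  · rintro ⟨a, ha, hac⟩
    refine ⟨a.filter (· ∉ B), fun i hi => by simp [hi], a, ha, ?_⟩
    calc a = a.filter (· ∈ B) + a.filter (· ∉ B) := (Finsupp.filter_add_filter_not a _).symm
      _ ≤ c + a.filter (· ∉ B) := add_le_add_left hac _
  · rintro ⟨v, hv, a, ha, hac⟩
    refine ⟨a, ha, fun i => ?_⟩
    by_cases hi : i ∈ B
    · simpa [hi, hv i hi] using hac i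
    · simp [hi]

theorem mem_span_filter_iff [CommRing R] [IsDomain R] (f : MvPolynomial σ R) :
    f ∈ Ideal.span ((monomial · (1 : R)) '' (Finsupp.filter (· ∈ B) '' G)) ↔
      ∃ g ∉ Ideal.span (X '' B), f * g ∈ Ideal.span ((monomial · (1 : R)) '' G) := by
  classical
  have := isPrime_span_X_image (R := R) B
  rw [exists_notMem_mul_mem_iff_mem_comap_map]
  revert f
  rw [← SetLike.ext_iff]
  refine le_antisymm (Ideal.span_le.mpr ?_) fun f hf => ?_
  · rintro _ ⟨_, ⟨a, ha, rfl⟩, rfl⟩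
    rw [SetLike.mem_coe, ← exists_notMem_mul_mem_iff_mem_comap_map]
    refine ⟨monomial (a.filter (· ∉ B)) 1, ?_, ?_⟩
    · rw [mem_ideal_span_X_image, support_monomial, if_neg one_ne_zero]
      simp +contextual
    · rw [monomial_mul, mul_one, Finsupp.filter_add_filter_not]
      exact Ideal.subset_span ⟨a, ha, rfl⟩
  · obtain ⟨g, hg, hfg⟩ := (exists_notMem_mul_mem_iff_mem_comap_map _ _ f).mpr hf
    rw [span_monomial_eq_restrictSupportIdeal] at hfg ⊢
    refine mem_restrictSupportIdeal_of_mul_mem _ (B := B) ?_ (restrictSupport_mono R ?_ hfg) hg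
    · rintro b e he ⟨_, ⟨a, ha, rfl⟩, hle⟩
      refine ⟨_, ⟨a, ha, rfl⟩, fun i => ?_⟩
      by_cases hi : i ∈ B
      · simpa [hi, he i hi] using hle i
      · simp [hi]
    · rintro c ⟨a, ha, hac⟩
      refine ⟨_, ⟨a, ha, rfl⟩, le_trans (fun i => ?_) hac⟩
      by_cases hi : i ∈ B <;> simp [hi]

end FilterMem

end MvPolynomial

theorem IsBorelType.of_monomial_mem_iff {K : Type*} [Field K] {n : ℕ}
    {I J : Ideal (MvPolynomial (Fin n) K)} (hI : IsBorelType I) (V : Set (Fin n →₀ ℕ))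
    (hJ : ∀ c, monomial c (1 : K) ∈ J ↔ ∃ v ∈ V, monomial (c + v) (1 : K) ∈ I) :
    IsBorelType J := by
  intro c hc i j hij s hs hsc
  obtain ⟨v, hv, hcv⟩ := (hJ c).mp hc
  obtain ⟨t, ht⟩ := hI (c + v) hcv i j hij s hs (hsc.trans le_self_add)
  refine ⟨t, (hJ _).mpr ⟨v, hv, ?_⟩⟩
  convert ht using 3
  ext l
  have : Finsupp.single j s l ≤ c l := by
    rcases eq_or_ne j l with rfl | h
    · simpa using hsc
    · simp [Finsupp.single_eq_of_ne' h]
  simp only [Finsupp.add_apply, Finsupp.tsub_apply]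
  omega

/-- If `I` is a monomial ideal of Borel type and `P` is a monomial prime ideal, then
`J(I, P)` is a monomial ideal of Borel type. -/
theorem JSet_borelType {K : Type*} [Field K] {n : ℕ}
    (I : Ideal (MvPolynomial (Fin n) K)) (hmon : IsMonomialIdeal I) (hBT : IsBorelType I)
    (B : Finset (Fin n)) :
    ∃ J : Ideal (MvPolynomial (Fin n) K),
      (J : Set (MvPolynomial (Fin n) K)) = JSet I (monomialPrime K B) ∧
        IsMonomialIdeal J ∧ IsBorelType J := by
  obtain ⟨G, rfl⟩ := hmon
  refine ⟨Ideal.span ((monomial · 1) '' (Finsupp.filter (· ∈ (B : Set (Fin n))) '' G)), ?_,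
    ⟨_, rfl⟩, hBT.of_monomial_mem_iff _ (monomial_one_mem_span_filter_iff _ G)⟩
  ext f
  exact mem_span_filter_iff _ G f
end

section
/- Let I be a strongly stable monomial ideal of S and let k ≥ 1 be an integer. Then the k-th symbolic power I^(k) is a strongly stable monomial ideal. -/
open MvPolynomial

/-- A monomial ideal `I` is strongly stable if for every monomial `u ∈ I` and all
indices `i < j` with `x_j ∣ u`, one has `x_i * (u / x_j) ∈ I`. -/
def IsStronglyStable {K : Type*} [Field K] {n : ℕ}
    (I : Ideal (MvPolynomial (Fin n) K)) : Prop :=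
  ∀ a : Fin n →₀ ℕ, (monomial a (1 : K) : MvPolynomial (Fin n) K) ∈ I →
    ∀ i j : Fin n, i < j → 1 ≤ a j →
      (monomial (a - Finsupp.single j 1 + Finsupp.single i 1) (1 : K) :
        MvPolynomial (Fin n) K) ∈ I

/-- The kernel of `R → (R/I)_P`: the ideal `{r : r * s ∈ I for some s ∉ P}`. -/
def kerLoc {R : Type*} [CommRing R] (I P : Ideal R) (hP : P.IsPrime) : Ideal R where
  carrier := {r : R | ∃ s, s ∉ P ∧ r * s ∈ I}
  add_mem' := by
    rintro a b ⟨s, hs, has⟩ ⟨t, ht, hbt⟩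
    refine ⟨s * t, fun h => (hP.mem_or_mem h).elim hs ht, ?_⟩
    have h : (a + b) * (s * t) = (a * s) * t + (b * t) * s := by ring
    rw [h]
    exact Ideal.add_mem _ (Ideal.mul_mem_right _ _ has) (Ideal.mul_mem_right _ _ hbt)
  zero_mem' := ⟨1, fun h => hP.ne_top ((Ideal.eq_top_iff_one P).mpr h), by simp⟩
  smul_mem' := by
    rintro c a ⟨s, hs, has⟩
    exact ⟨s, hs, by rw [smul_eq_mul, mul_assoc]; exact Ideal.mul_mem_left _ _ has⟩

/-- The `k`-th symbolic power of an ideal `I`: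
`I^(k) = ⋂_{P ∈ Min(I)} ker (R → (R/I^k)_P)`. -/
def symbolicPower {R : Type*} [CommRing R] (I : Ideal R) (k : ℕ) : Ideal R :=
  ⨅ P : I.minimalPrimes, kerLoc (I ^ k) P.1 P.2.1.1

/-
Every minimal prime of a monomial ideal is generated by variables, `P = (x_i : i ∈ A)`. For such
`P` and a monomial ideal `J`, the kernel `{r | r * s ∈ J for some s ∉ P}` is again monomial: if
`p * s ∈ J` with `s ∉ P`, a product of lowest `A`-degree terms of `p` and `s` survives in `p * s`,
and its factor from `s` involves no variable of `A`; so that monomial of `p` lies in the kernel,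
and one peels it off and repeats. Strong stability passes to `I ^ k`, since a monomial of `I ^ k`
is a product of monomials of `I ^ (k - 1)` and of `I`, and to the kernel, since moving `x_j` to
`x_i` in `x^b * x^a ∈ J` with `x^a ∉ P` stays in `J`. Intersections preserve both properties.
-/

open Finsupp
open scoped Pointwise

theorem Finsupp.tsub_single_add_single_add {σ : Type*} {b : σ →₀ ℕ} (c : σ →₀ ℕ) {i j : σ}
    (hbj : 1 ≤ b j) :
    b - single j 1 + single i 1 + c = b + c - single j 1 + single i 1 := by
  classical
  ext l
  simp only [coe_add, coe_tsub, Pi.add_apply, Pi.sub_apply, single_apply]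
  split_ifs <;> subst_vars <;> omega

namespace MvPolynomial

variable {σ R : Type*} [CommSemiring R]

theorem monomial_mem_of_one_mem {I : Ideal (MvPolynomial σ R)} {a : σ →₀ ℕ} (c : R)
    (ha : monomial a 1 ∈ I) : monomial a c ∈ I := by
  simpa [C_mul_monomial] using I.mul_mem_left (C c) ha

theorem mem_ideal_of_forall_monomial_mem {I : Ideal (MvPolynomial σ R)} {p : MvPolynomial σ R}
    (h : ∀ b ∈ p.support, monomial b 1 ∈ I) : p ∈ I := by
  rw [p.as_sum]
  exact Ideal.sum_mem _ fun b hb => monomial_mem_of_one_mem _ (h b hb)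

theorem monomial_mem_of_le {I : Ideal (MvPolynomial σ R)} {a b : σ →₀ ℕ}
    (ha : monomial a (1 : R) ∈ I) (hab : a ≤ b) : monomial b (1 : R) ∈ I :=
  Ideal.mem_of_dvd _ (monomial_dvd_monomial.2 ⟨Or.inr hab, one_dvd _⟩) ha

theorem exists_lowest_weight_add_mem_support_mul [NoZeroDivisors R] (w : σ → ℕ)
    {p s : MvPolynomial σ R} (hp : p ≠ 0) (hs : s ≠ 0) :
    ∃ a ∈ p.support, ∃ b ∈ s.support, (∀ a' ∈ p.support, weight w a ≤ weight w a') ∧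
      (∀ b' ∈ s.support, weight w b ≤ weight w b') ∧ a + b ∈ (p * s).support := by
  classical
  have hp' : (p.support.image (weight w)).Nonempty := by simpa using hp
  have hs' : (s.support.image (weight w)).Nonempty := by simpa using hs
  set mp := (p.support.image (weight w)).min' hp'
  set ms := (s.support.image (weight w)).min' hs'
  have hmin : UniqueAdd (p.support.image (weight w)) (s.support.image (weight w)) mp ms := by
    intro x y hx hy hxy
    have := Finset.min'_le _ _ hx
    have := Finset.min'_le _ _ hy
    omega
  obtain ⟨a₀, ha₀, ha₀p⟩ := Finset.mem_image.1 (Finset.min'_mem _ hp')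
  obtain ⟨b₀, hb₀, hb₀s⟩ := Finset.mem_image.1 (Finset.min'_mem _ hs')
  -- Among the lowest-weight terms pick a pair that is unique in its weight layer;
  -- it is then unique among all pairs, so its coefficient in `p * s` is a single product.
  obtain ⟨a, ha, b, hb, hab⟩ := UniqueSums.uniqueAdd_of_nonempty
    (A := p.support.filter (weight w · = mp)) (B := s.support.filter (weight w · = ms))
    ⟨a₀, Finset.mem_filter.2 ⟨ha₀, ha₀p⟩⟩ ⟨b₀, Finset.mem_filter.2 ⟨hb₀, hb₀s⟩⟩
  rw [Finset.mem_filter] at ha hb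
  have hunique := UniqueAdd.of_image_filter (weight w).toAddHom ha.2 hb.2 hmin hab
  refine ⟨a, ha.1, b, hb.1, fun a' ha' => ?_, fun b' hb' => ?_, ?_⟩
  · exact ha.2 ▸ Finset.min'_le _ _ (Finset.mem_image_of_mem _ ha')
  · exact hb.2 ▸ Finset.min'_le _ _ (Finset.mem_image_of_mem _ hb')
  · have hcoeff : coeff (a + b) (p * s) = coeff a p * coeff b s :=
      AddMonoidAlgebra.coeff_mul_add_of_uniqueAdd hunique
    rw [mem_support_iff, hcoeff]
    exact mul_ne_zero (mem_support_iff.1 ha.1) (mem_support_iff.1 hb.1)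

theorem weight_indicator_eq_zero_iff {A : Set σ} {m : σ →₀ ℕ} :
    weight (A.indicator 1) m = 0 ↔ ∀ i ∈ A, m i = 0 := by
  classical
  simp only [weight_apply, Finsupp.sum, Finset.sum_eq_zero_iff, Finsupp.mem_support_iff,
    smul_eq_mul, mul_eq_zero, Set.indicator_apply, Pi.one_apply]
  grind

theorem notMem_ideal_span_X_image_iff {A : Set σ} {p : MvPolynomial σ R} :
    p ∉ Ideal.span (X '' A) ↔ ∃ m ∈ p.support, weight (A.indicator 1) m = 0 := by
  simp [mem_ideal_span_X_image, weight_indicator_eq_zero_iff]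

theorem isPrime_ideal_span_X_image [NoZeroDivisors R] [Nontrivial R] (A : Set σ) :
    (Ideal.span (X '' A) : Ideal (MvPolynomial σ R)).IsPrime := by
  refine Ideal.isPrime_iff.2 ⟨?_, fun {f g} hfg => ?_⟩
  · rw [Ne, Ideal.eq_top_iff_one, notMem_ideal_span_X_image_iff]
    exact ⟨0, by simp, map_zero _⟩
  · by_contra! h
    obtain ⟨⟨m, hm, hm0⟩, ⟨m', hm', hm'0⟩⟩ := And.imp notMem_ideal_span_X_image_iff.1
      notMem_ideal_span_X_image_iff.1 h
    obtain ⟨a, -, b, -, ha, hb, hab⟩ := exists_lowest_weight_add_mem_support_mul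
      (A.indicator 1) (support_nonempty.1 ⟨m, hm⟩) (support_nonempty.1 ⟨m', hm'⟩)
    refine notMem_ideal_span_X_image_iff.2 ⟨a + b, hab, ?_⟩ hfg
    have ham := ha m hm
    have hbm := hb m' hm'
    rw [map_add]
    omega

theorem _root_.Ideal.IsPrime.exists_X_mem_of_monomial_mem {P : Ideal (MvPolynomial σ R)}
    (hP : P.IsPrime) {g : σ →₀ ℕ} (hg : monomial g (1 : R) ∈ P) : ∃ i, g i ≠ 0 ∧ X i ∈ P := by
  rw [monomial_eq, map_one, one_mul, Finsupp.prod] at hg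
  obtain ⟨i, hi, hXi⟩ := hP.prod_mem_iff.1 hg
  exact ⟨i, Finsupp.mem_support_iff.1 hi, hP.mem_of_pow_mem _ hXi⟩

end MvPolynomial

section MonomialIdeal

variable {K : Type*} [Field K] {n : ℕ}

theorem isMonomialIdeal_iff {I : Ideal (MvPolynomial (Fin n) K)} :
    IsMonomialIdeal I ↔ ∀ p ∈ I, ∀ b ∈ p.support, monomial b 1 ∈ I := by
  constructor
  · rintro ⟨G, rfl⟩ p hp b hb
    obtain ⟨g, hg, hgb⟩ := mem_ideal_span_monomial_image.1 hp b hb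
    exact monomial_mem_of_le (Ideal.subset_span ⟨g, hg, rfl⟩) hgb
  · refine fun h => ⟨{b | monomial b 1 ∈ I}, le_antisymm (fun p hp => ?_) (Ideal.span_le.2 ?_)⟩
    · exact mem_ideal_span_monomial_image.2 fun b hb => ⟨b, h p hp b hb, le_rfl⟩
    · rintro _ ⟨b, hb, rfl⟩
      exact hb

theorem isMonomialIdeal_top : IsMonomialIdeal (⊤ : Ideal (MvPolynomial (Fin n) K)) :=
  isMonomialIdeal_iff.2 fun _ _ _ _ => Submodule.mem_top

theorem isMonomialIdeal_iInf {ι : Sort*} {I : ι → Ideal (MvPolynomial (Fin n) K)}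
    (h : ∀ i, IsMonomialIdeal (I i)) : IsMonomialIdeal (⨅ i, I i) :=
  isMonomialIdeal_iff.2 fun p hp b hb => Submodule.mem_iInf _ |>.2 fun i =>
    isMonomialIdeal_iff.1 (h i) p (Submodule.mem_iInf _ |>.1 hp i) b hb

theorem isMonomialIdeal_of_exists_monomial_mem {I : Ideal (MvPolynomial (Fin n) K)}
    (h : ∀ p ∈ I, p ≠ 0 → ∃ b ∈ p.support, monomial b 1 ∈ I) : IsMonomialIdeal I := by
  refine isMonomialIdeal_iff.2 fun p hp => ?_
  induction hN : p.support.card using Nat.strong_induction_on generalizing p with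
  | _ N ih =>
  intro b hb
  obtain ⟨a, ha, haI⟩ := h p hp (support_nonempty.1 ⟨b, hb⟩)
  set q := p - monomial a (coeff a p)
  have hq : q ∈ I := sub_mem hp (monomial_mem_of_one_mem _ haI)
  have hsupp : q.support = p.support.erase a := by
    ext c
    rcases eq_or_ne c a with rfl | hc
    · simp [q]
    · simp [q, coeff_monomial, hc, hc.symm]
  by_cases hba : b = a
  · exact hba ▸ haI
  · exact ih _ (hN ▸ Finset.card_erase_lt_of_mem ha) q hq (congrArg Finset.card hsupp) b
      (hsupp ▸ Finset.mem_erase.2 ⟨hba, hb⟩)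

theorem ideal_span_monomial_image_mul (G H : Set (Fin n →₀ ℕ)) :
    Ideal.span ((fun a => (monomial a (1 : K) : MvPolynomial (Fin n) K)) '' G) *
        Ideal.span ((fun a => monomial a 1) '' H) =
      Ideal.span ((fun a => monomial a 1) '' (G + H)) := by
  rw [Ideal.span_mul_span']
  congr 1
  ext
  simp [Set.mem_mul, Set.mem_add, monomial_mul]

theorem IsMonomialIdeal.mul {I J : Ideal (MvPolynomial (Fin n) K)} (hI : IsMonomialIdeal I)
    (hJ : IsMonomialIdeal J) : IsMonomialIdeal (I * J) := by
  obtain ⟨G, rfl⟩ := hI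
  obtain ⟨H, rfl⟩ := hJ
  exact ⟨G + H, ideal_span_monomial_image_mul G H⟩

theorem IsMonomialIdeal.exists_add_eq_of_monomial_mem_mul {I J : Ideal (MvPolynomial (Fin n) K)}
    (hI : IsMonomialIdeal I) (hJ : IsMonomialIdeal J) {a : Fin n →₀ ℕ}
    (ha : monomial a 1 ∈ I * J) :
    ∃ b c, monomial b 1 ∈ I ∧ monomial c 1 ∈ J ∧ b + c = a := by
  obtain ⟨G, rfl⟩ := hI
  obtain ⟨H, rfl⟩ := hJ
  rw [ideal_span_monomial_image_mul, mem_ideal_span_monomial_image] at ha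
  obtain ⟨_, ⟨g, hg, h, hh, rfl⟩, hle⟩ := ha a (by simp)
  refine ⟨g + (a - (g + h)), h, monomial_mem_of_le (Ideal.subset_span ⟨g, hg, rfl⟩) le_self_add,
    Ideal.subset_span ⟨h, hh, rfl⟩, ?_⟩
  rw [add_right_comm]
  exact add_tsub_cancel_of_le hle

theorem IsMonomialIdeal.pow {I : Ideal (MvPolynomial (Fin n) K)} (hI : IsMonomialIdeal I) :
    ∀ k : ℕ, IsMonomialIdeal (I ^ k)
  | 0 => by rw [pow_zero, Ideal.one_eq_top]; exact isMonomialIdeal_top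
  | k + 1 => by rw [pow_succ]; exact (hI.pow k).mul hI

theorem IsMonomialIdeal.eq_span_X_image_of_mem_minimalPrimes
    {I P : Ideal (MvPolynomial (Fin n) K)} (hI : IsMonomialIdeal I) (hP : P ∈ I.minimalPrimes) :
    P = Ideal.span (X '' {i | X i ∈ P}) := by
  have hle : Ideal.span (X '' {i | X i ∈ P}) ≤ P := Ideal.span_le.2 <| by
    rintro _ ⟨i, hi, rfl⟩
    exact hi
  refine le_antisymm (hP.2 ⟨isPrime_ideal_span_X_image _, ?_⟩ hle) hle
  obtain ⟨G, rfl⟩ := hI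
  refine Ideal.span_le.2 ?_
  rintro _ ⟨g, hg, rfl⟩
  obtain ⟨i, hgi, hXi⟩ :=
    hP.1.1.exists_X_mem_of_monomial_mem (hP.1.2 (Ideal.subset_span ⟨g, hg, rfl⟩))
  simpa [mem_ideal_span_X_image] using ⟨i, hXi, hgi⟩

theorem isMonomialIdeal_kerLoc {J P : Ideal (MvPolynomial (Fin n) K)} (hJ : IsMonomialIdeal J)
    (hP : P.IsPrime) {A : Set (Fin n)} (hPA : P = Ideal.span (X '' A)) :
    IsMonomialIdeal (kerLoc J P hP) := by
  subst hPA
  refine isMonomialIdeal_of_exists_monomial_mem fun p ⟨s, hsP, hps⟩ hp => ?_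
  have hs : s ≠ 0 := by
    rintro rfl
    exact hsP (zero_mem _)
  -- the lowest `A`-degree term of `s` has no variable of `A`, hence lies outside `P`
  obtain ⟨a, ha, b, -, -, hb, hab⟩ :=
    exists_lowest_weight_add_mem_support_mul (A.indicator 1) hp hs
  obtain ⟨m, hm, hm0⟩ := notMem_ideal_span_X_image_iff.1 hsP
  refine ⟨a, ha, monomial b 1, notMem_ideal_span_X_image_iff.2 ⟨b, by simp, ?_⟩, ?_⟩
  · exact Nat.eq_zero_of_le_zero (hm0 ▸ hb m hm)
  · rw [monomial_mul, one_mul]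
    exact isMonomialIdeal_iff.1 hJ _ hps _ hab

end MonomialIdeal

section StronglyStable

variable {K : Type*} [Field K] {n : ℕ}

theorem isStronglyStable_top : IsStronglyStable (⊤ : Ideal (MvPolynomial (Fin n) K)) :=
  fun _ _ _ _ _ _ => Submodule.mem_top

theorem isStronglyStable_iInf {ι : Sort*} {I : ι → Ideal (MvPolynomial (Fin n) K)}
    (h : ∀ i, IsStronglyStable (I i)) : IsStronglyStable (⨅ i, I i) :=
  fun a ha i j hij haj => Submodule.mem_iInf _ |>.2 fun l =>
    h l a (Submodule.mem_iInf _ |>.1 ha l) i j hij haj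

theorem IsStronglyStable.mul {I J : Ideal (MvPolynomial (Fin n) K)} (hI : IsMonomialIdeal I)
    (hJ : IsMonomialIdeal J) (hsI : IsStronglyStable I) (hsJ : IsStronglyStable J) :
    IsStronglyStable (I * J) := by
  intro a ha i j hij haj
  obtain ⟨b, c, hb, hc, rfl⟩ := hI.exists_add_eq_of_monomial_mem_mul hJ ha
  rcases le_or_gt 1 (b j) with hbj | hbj
  · have h := Ideal.mul_mem_mul (hsI b hb i j hij hbj) hc
    rwa [monomial_mul, one_mul, tsub_single_add_single_add c hbj] at h
  · have hcj : 1 ≤ c j := by simp at haj; omega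
    have h := Ideal.mul_mem_mul hb (hsJ c hc i j hij hcj)
    rwa [monomial_mul, one_mul, add_comm, tsub_single_add_single_add b hcj, add_comm c] at h

theorem IsStronglyStable.pow {I : Ideal (MvPolynomial (Fin n) K)} (hI : IsMonomialIdeal I)
    (hsI : IsStronglyStable I) : ∀ k : ℕ, IsStronglyStable (I ^ k)
  | 0 => by rw [pow_zero, Ideal.one_eq_top]; exact isStronglyStable_top
  | k + 1 => by rw [pow_succ]; exact (hsI.pow hI k).mul (hI.pow k) hI hsI

theorem isStronglyStable_kerLoc {J P : Ideal (MvPolynomial (Fin n) K)} (hJ : IsMonomialIdeal J)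
    (hsJ : IsStronglyStable J) (hP : P.IsPrime) : IsStronglyStable (kerLoc J P hP) := by
  rintro b ⟨s, hsP, hbs⟩ i j hij hbj
  obtain ⟨a, ha, haP⟩ : ∃ a ∈ s.support, monomial a 1 ∉ P := by
    by_contra! h
    exact hsP (mem_ideal_of_forall_monomial_mem h)
  have hba : monomial (b + a) 1 ∈ J := isMonomialIdeal_iff.1 hJ _ hbs _ <| by
    simpa [MvPolynomial.mem_support_iff, coeff_monomial_mul] using ha
  refine ⟨monomial a 1, haP, ?_⟩
  rw [monomial_mul, one_mul, tsub_single_add_single_add a hbj]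
  exact hsJ _ hba i j hij (le_add_right hbj)

end StronglyStable

theorem symbolicPower_stronglyStable_general {K : Type*} [Field K] {n : ℕ}
    (I : Ideal (MvPolynomial (Fin n) K)) (hmon : IsMonomialIdeal I)
    (hSS : IsStronglyStable I) (k : ℕ) :
    IsMonomialIdeal (symbolicPower I k) ∧ IsStronglyStable (symbolicPower I k) :=
  ⟨isMonomialIdeal_iInf fun P => isMonomialIdeal_kerLoc (hmon.pow k) P.2.1.1
      (hmon.eq_span_X_image_of_mem_minimalPrimes P.2),
    isStronglyStable_iInf fun P => isStronglyStable_kerLoc (hmon.pow k) (hSS.pow hmon k) P.2.1.1⟩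

/-- If `I` is a strongly stable monomial ideal, then the `k`-th symbolic power `I^(k)`
is a strongly stable monomial ideal. -/
theorem symbolicPower_stronglyStable {K : Type*} [Field K] {n : ℕ}
    (I : Ideal (MvPolynomial (Fin n) K)) (hmon : IsMonomialIdeal I)
    (hSS : IsStronglyStable I) (k : ℕ) (hk : 1 ≤ k) :
    IsMonomialIdeal (symbolicPower I k) ∧ IsStronglyStable (symbolicPower I k) :=
  symbolicPower_stronglyStable_general I hmon hSS k
end

section
/- Let I be a stably lexsegment monomial ideal of S (i.e., I^k is lexsegment for every integer k ≥ 1). Then the k-th symbolic power I^(k) is a lexsegment monomial ideal for every integer k ≥ 1. -/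
open MvPolynomial

/-- `x^a >_lex x^b` in the lexicographic order with `x_1 > x_2 > … > x_n`:
at the smallest index `i` where the exponents differ, `a i > b i`. -/
def LexGT {n : ℕ} (a b : Fin n →₀ ℕ) : Prop :=
  ∃ i : Fin n, b i < a i ∧ ∀ j : Fin n, j < i → a j = b j

/-- A monomial ideal `I` is lexsegment if for every monomial `u ∈ I` and every
monomial `v` of the same total degree with `v >_lex u`, one has `v ∈ I`. -/
def IsLexsegment {K : Type*} [Field K] {n : ℕ}
    (I : Ideal (MvPolynomial (Fin n) K)) : Prop :=
  ∀ a b : Fin n →₀ ℕ, (monomial a (1 : K) : MvPolynomial (Fin n) K) ∈ I →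
    (∑ i, b i) = (∑ i, a i) → LexGT b a →
      (monomial b (1 : K) : MvPolynomial (Fin n) K) ∈ I

/-- If `I` is a stably lexsegment monomial ideal (`I ^ k` is lexsegment for every
`k ≥ 1`), then the `k`-th symbolic power `I^(k)` is lexsegment for every `k ≥ 1`. -/
theorem symbolicPower_lexsegment_of_stablyLexsegment {K : Type*} [Field K] {n : ℕ}
    (I : Ideal (MvPolynomial (Fin n) K)) (hmon : IsMonomialIdeal I)
    (hstab : ∀ k : ℕ, 1 ≤ k → IsLexsegment (I ^ k)) (k : ℕ) (hk : 1 ≤ k) :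
    IsLexsegment (symbolicPower I k) := by
  classical
  obtain ⟨G, hG⟩ := hmon
  -- `I ^ k` is a monomial ideal
  have hpow : ∀ m : ℕ, ∃ Gm : Set (Fin n →₀ ℕ),
      I ^ m = Ideal.span ((fun a => (monomial a (1 : K) : MvPolynomial (Fin n) K)) '' Gm) := by
    intro m
    induction m with
    | zero =>
      refine ⟨{0}, ?_⟩
      simp only [pow_zero, Set.image_singleton]
      rw [show (monomial (0 : Fin n →₀ ℕ) (1 : K) : MvPolynomial (Fin n) K) = 1 by
        simp [monomial_zero'], Ideal.span_singleton_one, Ideal.one_eq_top]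
    | succ m ih =>
      obtain ⟨Gm, hGm⟩ := ih
      refine ⟨Set.image2 (· + ·) Gm G, ?_⟩
      rw [pow_succ, hGm, hG, Ideal.span_mul_span']
      congr 1
      ext f
      simp only [Set.mem_mul, Set.mem_image, Set.mem_image2]
      constructor
      · rintro ⟨x, ⟨u, hu, rfl⟩, y, ⟨v, hv, rfl⟩, rfl⟩
        exact ⟨u + v, ⟨u, hu, v, hv, rfl⟩, by rw [monomial_mul, one_mul]⟩
      · rintro ⟨w, ⟨u, hu, v, hv, rfl⟩, rfl⟩
        exact ⟨_, ⟨u, hu, rfl⟩, _, ⟨v, hv, rfl⟩, by rw [monomial_mul, one_mul]⟩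
  obtain ⟨Gk, hGk⟩ := hpow k
  have hlexJ := hstab k hk
  intro a b ha hdeg hlex
  rw [symbolicPower, Ideal.mem_iInf] at ha ⊢
  intro P
  obtain ⟨s, hs, hmem⟩ := ha P
  refine ⟨s, hs, ?_⟩
  -- key : every shifted monomial is in `I ^ k`
  have key : ∀ c ∈ s.support, (monomial (b + c) (1 : K) : MvPolynomial (Fin n) K) ∈ I ^ k := by
    intro c hc
    have hac : (monomial (a + c) (1 : K) : MvPolynomial (Fin n) K) ∈ I ^ k := by
      rw [hGk, mem_ideal_span_monomial_image] at hmem ⊢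
      intro d hd
      rw [support_monomial, if_neg one_ne_zero, Finset.mem_singleton] at hd
      subst hd
      apply hmem
      rw [mem_support_iff, coeff_monomial_mul, one_mul]
      exact mem_support_iff.mp hc
    refine hlexJ (a + c) (b + c) hac ?_ ?_
    · simp only [Finsupp.add_apply, Finset.sum_add_distrib, hdeg]
    · obtain ⟨i, hi, hj⟩ := hlex
      refine ⟨i, ?_, fun j hji => ?_⟩
      · simpa using Nat.add_lt_add_right hi (c i)
      · simp [hj j hji]
  have hdecomp : (monomial b (1 : K) : MvPolynomial (Fin n) K) * s
      = ∑ c ∈ s.support, (s.coeff c) • (monomial (b + c) (1 : K) : MvPolynomial (Fin n) K) := by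
    conv_lhs => rw [s.as_sum]
    rw [Finset.mul_sum]
    refine Finset.sum_congr rfl fun c hc => ?_
    rw [monomial_mul, smul_monomial, one_mul, smul_eq_mul, mul_one]
  rw [hdecomp]
  exact Ideal.sum_mem _ fun c hc => Submodule.smul_of_tower_mem _ _ (key c hc)
end

section
/- Let I be an ideal of a commutative Noetherian ring R and let k ≥ 1 be an integer. For each P ∈ Min(I), let Q(P) = {r ∈ R : r·s ∈ I for some s ∈ R∖P} (the P-primary component of I) and let Q(P)^(k) = {r ∈ R : r·s ∈ Q(P)^k for some s ∈ R∖P}. Then ⋂_{P ∈ Min(I)} Q(P)^k ⊆ I^(k) ⊆ ⋂_{P ∈ Min(I)} Q(P)^(k). Moreover, if Q(P)^k is a primary ideal for every P ∈ Min(I), then I^(k) = ⋂_{P ∈ Min(I)} Q(P)^k. -/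
lemma mem_kerLoc {R : Type*} [CommRing R] {I P : Ideal R} {hP : P.IsPrime} {r : R} :
    r ∈ kerLoc I P hP ↔ ∃ s, s ∉ P ∧ r * s ∈ I := Iff.rfl

lemma kerLoc_mono {R : Type*} [CommRing R] {I J P : Ideal R} (hP : P.IsPrime)
    (h : I ≤ J) : kerLoc I P hP ≤ kerLoc J P hP := by
  rintro r ⟨s, hs, hrs⟩; exact ⟨s, hs, h hrs⟩

lemma le_kerLoc {R : Type*} [CommRing R] (I P : Ideal R) (hP : P.IsPrime) :
    I ≤ kerLoc I P hP := fun r hr =>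
  ⟨1, fun h => hP.ne_top ((Ideal.eq_top_iff_one P).mpr h), by simpa using hr⟩

lemma kerLoc_mul {R : Type*} [CommRing R] (I J P : Ideal R) (hP : P.IsPrime) :
    kerLoc I P hP * kerLoc J P hP ≤ kerLoc (I * J) P hP := by
  refine Submodule.mul_le.2 ?_
  rintro a ⟨s, hs, has⟩ b ⟨t, ht, hbt⟩
  refine ⟨s * t, fun h => (hP.mem_or_mem h).elim hs ht, ?_⟩
  have : a * b * (s * t) = (a * s) * (b * t) := by ring
  rw [this]; exact Ideal.mul_mem_mul has hbt

lemma pow_kerLoc_le {R : Type*} [CommRing R] (I P : Ideal R) (hP : P.IsPrime) (k : ℕ) :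
    (kerLoc I P hP) ^ k ≤ kerLoc (I ^ k) P hP := by
  induction k with
  | zero =>
      rw [pow_zero, pow_zero]
      intro r _
      exact ⟨1, fun h => hP.ne_top ((Ideal.eq_top_iff_one P).mpr h), by simp [Ideal.one_eq_top]⟩
  | succ n ih =>
      rw [pow_succ, pow_succ]
      exact le_trans (Ideal.mul_mono_left ih) (kerLoc_mul _ _ _ hP)

lemma kerLoc_le_prime {R : Type*} [CommRing R] {I P : Ideal R} (hP : P.IsPrime)
    (h : I ≤ P) : kerLoc I P hP ≤ P := by
  rintro r ⟨s, hs, hrs⟩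
  exact ((hP.mem_or_mem (h hrs)).resolve_right hs)
/-- Let `I` be an ideal of a commutative Noetherian ring `R` and `k ≥ 1`. For each
minimal prime `P` of `I` let `Q(P) = kerLoc I P` be the `P`-primary component of `I`
and `Q(P)^(k) = kerLoc (Q(P)^k) P` its `k`-th symbolic power. Then
`⋂_P Q(P)^k ⊆ I^(k) ⊆ ⋂_P Q(P)^(k)`; moreover, if `Q(P)^k` is primary for every
minimal prime `P` of `I`, then `I^(k) = ⋂_P Q(P)^k`. -/
theorem symbolicPower_between {R : Type*} [CommRing R] [IsNoetherianRing R]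
    (I : Ideal R) (k : ℕ) (hk : 1 ≤ k) :
    ((⨅ P : I.minimalPrimes, (kerLoc I P.1 P.2.1.1) ^ k) ≤ symbolicPower I k ∧
      symbolicPower I k ≤
        ⨅ P : I.minimalPrimes, kerLoc ((kerLoc I P.1 P.2.1.1) ^ k) P.1 P.2.1.1) ∧
    ((∀ P : I.minimalPrimes, ((kerLoc I P.1 P.2.1.1) ^ k).IsPrimary) →
      symbolicPower I k = ⨅ P : I.minimalPrimes, (kerLoc I P.1 P.2.1.1) ^ k) := by
  have hQle : ∀ P : I.minimalPrimes,
      (kerLoc I P.1 P.2.1.1) ^ k ≤ kerLoc (I ^ k) P.1 P.2.1.1 :=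
    fun P => pow_kerLoc_le _ _ _ _
  refine ⟨⟨le_iInf fun P => (iInf_le _ P).trans (hQle P), ?_⟩, ?_⟩
  · refine le_iInf fun P => (iInf_le (fun P : I.minimalPrimes =>
      kerLoc (I ^ k) P.1 P.2.1.1) P).trans ?_
    exact kerLoc_mono _ (Ideal.pow_right_mono (le_kerLoc I P.1 P.2.1.1) k)
  · intro hprim
    refine le_antisymm (le_iInf fun P => ?_)
      (le_iInf fun P => (iInf_le _ P).trans (hQle P))
    refine (iInf_le (fun P : I.minimalPrimes => kerLoc (I ^ k) P.1 P.2.1.1) P).trans ?_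
    rintro r ⟨s, hs, hrs⟩
    have hQP : (kerLoc I P.1 P.2.1.1) ^ k ≤ P.1 :=
      le_trans (Ideal.pow_le_self (by omega)) (kerLoc_le_prime P.2.1.1 P.2.1.2)
    have hrsQ : r * s ∈ (kerLoc I P.1 P.2.1.1) ^ k :=
      Ideal.pow_right_mono (le_kerLoc I P.1 P.2.1.1) k hrs
    rcases (hprim P).2 (by rwa [mul_comm] at hrsQ : s * r ∈ _) with h | h
    · exact h
    · obtain ⟨n, hn⟩ := h
      have hsn : s ^ n ∈ (kerLoc I P.1 P.2.1.1) ^ k := by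
        simpa using hn (Submodule.smul_mem_pointwise_smul 1 _ _ Submodule.mem_top)
      exact absurd (P.2.1.1.mem_of_pow_mem n (hQP hsn)) hs
end

section
/- Let I be a proper monomial ideal of S with minimal monomial generating set G_min(I). Then a prime ideal of S is minimal over I if and only if it equals P_B for some B ⊆ {1,…,n} that is a minimal nonface of the eliminating simplicial complex of I; that is, Min(I) = {P_B : B ⊆ {1,…,n}, the ideal generated by {u(B) : u ∈ G_min(I)} is proper, and for every proper subset A ⊊ B the ideal generated by {u(A) : u ∈ G_min(I)} equals S}. -/
open MvPolynomial

/-- `G_min(I)`: the exponent vectors of the minimal monomial generators of `I`, i.e. the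
monomials `u ∈ I` such that `u / x_j ∉ I` for every variable `x_j` dividing `u`. -/
def minGens {K : Type*} [Field K] {n : ℕ} (I : Ideal (MvPolynomial (Fin n) K)) :
    Set (Fin n →₀ ℕ) :=
  {a | (monomial a (1 : K) : MvPolynomial (Fin n) K) ∈ I ∧
    ∀ j : Fin n, a j ≠ 0 →
      (monomial (a - Finsupp.single j 1) (1 : K) : MvPolynomial (Fin n) K) ∉ I}

/-- The restriction `u(B)` of an exponent vector: `u(B) = ∏_{j ∈ B} x_j ^ (a j)`. -/
def restrictExp {n : ℕ} (B : Finset (Fin n)) (a : Fin n →₀ ℕ) : Fin n →₀ ℕ :=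
  Finsupp.filter (· ∈ B) a

/-- The ideal generated by `{u(A) : u ∈ G_min(I)}`; the eliminating simplicial complex
of `I` consists of the `A ⊆ [n]` for which this ideal is all of `S`. -/
noncomputable def elimIdeal {K : Type*} [Field K] {n : ℕ} (I : Ideal (MvPolynomial (Fin n) K))
    (A : Finset (Fin n)) : Ideal (MvPolynomial (Fin n) K) :=
  Ideal.span ((fun a => (monomial (restrictExp A a) (1 : K) : MvPolynomial (Fin n) K)) ''
    minGens I)

/-!
A prime `P` containing a monomial ideal `I` contains the monomial prime `P_C`, `C = {i | x_i ∈ P}`,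
and `P_C` still contains `I`: every minimal generator lies in `P`, so by primality one of its
variables does. Hence the minimal primes of `I` are the `P_B` with `B` minimal such that
`I ⊆ P_B`. Finally `I ⊆ P_B` iff every minimal generator `u` involves a variable of `B`, i.e.
iff no `u(B)` is `1`, i.e. iff `B` is a nonface. `P_B` is prime as the kernel of the substitution
`x_i ↦ 0` for `i ∈ B`.
-/

section

variable {K : Type*} [Field K] {n : ℕ}

theorem monomial_one_mem_monomialPrime_iff {B : Finset (Fin n)} {a : Fin n →₀ ℕ} :
    (monomial a (1 : K) : MvPolynomial (Fin n) K) ∈ monomialPrime K B ↔ ∃ i ∈ B, a i ≠ 0 := by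
  classical
  simp [monomialPrime, mem_ideal_span_X_image, support_monomial]

theorem X_mem_monomialPrime_iff {B : Finset (Fin n)} {i : Fin n} :
    (X i : MvPolynomial (Fin n) K) ∈ monomialPrime K B ↔ i ∈ B := by
  simp [monomialPrime, mem_ideal_span_X_image, support_X, Finsupp.single_apply]

theorem monomialPrime_le_monomialPrime_iff {A B : Finset (Fin n)} :
    monomialPrime K A ≤ monomialPrime K B ↔ A ⊆ B := by
  refine ⟨fun h i hi => X_mem_monomialPrime_iff.1 (h (X_mem_monomialPrime_iff.2 hi)), fun h => ?_⟩
  exact Ideal.span_mono (Set.image_mono (Finset.coe_subset.2 h))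

variable (K) in
noncomputable def killVars (B : Finset (Fin n)) :
    MvPolynomial (Fin n) K →ₐ[K] MvPolynomial (Fin n) K :=
  aeval fun i => if i ∈ B then 0 else X i

theorem mk_comp_killVars (B : Finset (Fin n)) :
    (Ideal.Quotient.mkₐ K (monomialPrime K B)).comp (killVars K B) =
      Ideal.Quotient.mkₐ K (monomialPrime K B) := by
  refine algHom_ext fun i => ?_
  by_cases hi : i ∈ B
  · simpa [killVars, hi] using
      (Ideal.Quotient.eq_zero_iff_mem.2 (X_mem_monomialPrime_iff.2 hi)).symm
  · simp [killVars, hi]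

theorem ker_killVars (B : Finset (Fin n)) :
    RingHom.ker (killVars K B) = monomialPrime K B := by
  refine le_antisymm (fun f hf => ?_) ?_
  · rw [← Ideal.Quotient.eq_zero_iff_mem, ← Ideal.Quotient.mkₐ_eq_mk K, ← mk_comp_killVars]
    simp [RingHom.mem_ker.1 hf]
  · refine Ideal.span_le.2 ?_
    rintro _ ⟨i, hi, rfl⟩
    simp [killVars, Finset.mem_coe.1 hi]

theorem monomialPrime_isPrime (B : Finset (Fin n)) : (monomialPrime K B).IsPrime :=
  ker_killVars (K := K) B ▸ RingHom.ker_isPrime _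

theorem mem_minGens_of_minimal {I : Ideal (MvPolynomial (Fin n) K)} {a : Fin n →₀ ℕ}
    (ha : Minimal (fun b => (monomial b (1 : K) : MvPolynomial (Fin n) K) ∈ I) a) :
    a ∈ minGens I := by
  refine ⟨ha.prop, fun j hj => ha.not_prop_of_lt ?_⟩
  refine lt_of_le_of_ne tsub_le_self fun h => hj ?_
  have := DFunLike.congr_fun h j
  simp only [Finsupp.tsub_apply, Finsupp.single_eq_same] at this
  omega

theorem exists_mem_minGens_le {I : Ideal (MvPolynomial (Fin n) K)} {a : Fin n →₀ ℕ}
    (ha : (monomial a (1 : K) : MvPolynomial (Fin n) K) ∈ I) : ∃ b ∈ minGens I, b ≤ a := by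
  obtain ⟨b, hba, hb⟩ := exists_minimal_le_of_wellFoundedLT (fun b => monomial b (1 : K) ∈ I) a ha
  exact ⟨b, mem_minGens_of_minimal hb, hba⟩

theorem span_minGens {I : Ideal (MvPolynomial (Fin n) K)} (hmon : IsMonomialIdeal I) :
    Ideal.span ((fun a => (monomial a (1 : K) : MvPolynomial (Fin n) K)) '' minGens I) = I := by
  classical
  obtain ⟨G, hG⟩ := hmon
  refine le_antisymm (Ideal.span_le.2 fun _ ⟨a, ha, h⟩ => h ▸ ha.1) ?_
  nth_rw 1 [hG]
  refine Ideal.span_le.2 ?_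
  rintro _ ⟨a, haG, rfl⟩
  have haI : (monomial a (1 : K) : MvPolynomial (Fin n) K) ∈ I := by
    rw [hG]; exact Ideal.subset_span ⟨a, haG, rfl⟩
  obtain ⟨b, hb, hba⟩ := exists_mem_minGens_le haI
  exact mem_ideal_span_monomial_image.2 fun x hx => ⟨b, hb, by simp_all [support_monomial]⟩

theorem elimIdeal_eq_top_iff {I : Ideal (MvPolynomial (Fin n) K)} {B : Finset (Fin n)} :
    elimIdeal I B = ⊤ ↔ ∃ a ∈ minGens I, ∀ i ∈ B, a i = 0 := by
  classical
  rw [elimIdeal, Ideal.eq_top_iff_one, ← Set.image_image (monomial · 1), ← C_1, ← monomial_zero',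
    mem_ideal_span_monomial_image]
  simp [restrictExp, Finsupp.filter_eq_zero_iff]

theorem le_monomialPrime_iff {I : Ideal (MvPolynomial (Fin n) K)} (hmon : IsMonomialIdeal I)
    {B : Finset (Fin n)} : I ≤ monomialPrime K B ↔ elimIdeal I B ≠ ⊤ := by
  nth_rw 1 [← span_minGens hmon]
  rw [Ideal.span_le, Ne, elimIdeal_eq_top_iff]
  simp [Set.subset_def, monomial_one_mem_monomialPrime_iff]

theorem exists_monomialPrime_between {I P : Ideal (MvPolynomial (Fin n) K)}
    (hmon : IsMonomialIdeal I) (hP : P.IsPrime) (hIP : I ≤ P) :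
    ∃ C : Finset (Fin n), I ≤ monomialPrime K C ∧ monomialPrime K C ≤ P := by
  classical
  refine ⟨Finset.univ.filter fun i => X i ∈ P, ?_,
    Ideal.span_le.2 fun _ ⟨i, hi, h⟩ => h ▸ by simpa using hi⟩
  nth_rw 1 [← span_minGens hmon]
  rw [Ideal.span_le]
  rintro _ ⟨a, ha, rfl⟩
  have haP := hIP ha.1
  rw [monomial_eq, C_1, one_mul, Finsupp.prod, hP.prod_mem_iff] at haP
  obtain ⟨i, hi, hXi⟩ := haP
  exact monomial_one_mem_monomialPrime_iff.2
    ⟨i, by simpa using hP.mem_of_pow_mem _ hXi, Finsupp.mem_support_iff.1 hi⟩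

end

theorem minimalPrimes_eq_minimal_nonfaces_general {K : Type*} [Field K] {n : ℕ}
    (I : Ideal (MvPolynomial (Fin n) K)) (hmon : IsMonomialIdeal I) :
    I.minimalPrimes =
      {P | ∃ B : Finset (Fin n), P = monomialPrime K B ∧ elimIdeal I B ≠ ⊤ ∧
        ∀ A : Finset (Fin n), A ⊂ B → elimIdeal I A = ⊤} := by
  ext P
  constructor
  · intro hP
    obtain ⟨B, hIB, hBP⟩ := exists_monomialPrime_between hmon hP.isPrime hP.le
    obtain rfl : P = monomialPrime K B :=
      le_antisymm (hP.2 ⟨monomialPrime_isPrime B, hIB⟩ hBP) hBP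
    refine ⟨B, rfl, (le_monomialPrime_iff hmon).1 hIB, fun A hAB => not_not.1 fun hA => ?_⟩
    have hBA := hP.2 ⟨monomialPrime_isPrime A, (le_monomialPrime_iff hmon).2 hA⟩
      (monomialPrime_le_monomialPrime_iff.2 hAB.subset)
    exact hAB.not_subset (monomialPrime_le_monomialPrime_iff.1 hBA)
  · rintro ⟨B, rfl, hB, hnonface⟩
    refine ⟨⟨monomialPrime_isPrime B, (le_monomialPrime_iff hmon).2 hB⟩, fun Q ⟨hQ, hIQ⟩ hQB => ?_⟩
    obtain ⟨C, hIC, hCQ⟩ := exists_monomialPrime_between hmon hQ hIQ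
    have hCB : C ⊆ B := monomialPrime_le_monomialPrime_iff.1 (hCQ.trans hQB)
    obtain rfl : C = B := by_contra fun hne =>
      (le_monomialPrime_iff hmon).1 hIC (hnonface C (hCB.ssubset_of_ne hne))
    exact hCQ

/-- For a proper monomial ideal `I`, the minimal primes of `I` are exactly the ideals
`P_B` where `B` runs over the minimal nonfaces of the eliminating simplicial
complex of `I`. -/
theorem minimalPrimes_eq_minimal_nonfaces {K : Type*} [Field K] {n : ℕ}
    (I : Ideal (MvPolynomial (Fin n) K)) (hmon : IsMonomialIdeal I) (hproper : I ≠ ⊤) :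
    I.minimalPrimes =
      {P | ∃ B : Finset (Fin n), P = monomialPrime K B ∧ elimIdeal I B ≠ ⊤ ∧
        ∀ A : Finset (Fin n), A ⊂ B → elimIdeal I A = ⊤} :=
  minimalPrimes_eq_minimal_nonfaces_general I hmon
end

section
/- Let I be a nonzero proper monomial ideal of S with minimal monomial generating set G_min(I) of cardinality m. The following are equivalent: (a) there exist positive integers a_1,…,a_m such that G_min(I) = {x_i^{a_i}·∏_{j=1}^{i-1} x_j^{a_j−1} : i = 1,…,m} (I is universal lexsegment); (b) for every monomial u = ∏_j x_j^{b_j} ∈ I, setting m(u) = max{j : b_j > 0}, one has x_i·(u / x_{m(u)}^{b_{m(u)}}) ∈ I for every i < m(u); (c) for every monomial u = ∏_j x_j^{b_j} ∈ I and every pair of indices i < j with b_j > 0, one has x_i·(u / x_j^{b_j}) ∈ I. -/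
open MvPolynomial

/-- The exponent vector of the universal lexsegment generator
`u_i = x_i ^ (a i) * ∏_{j < i} x_j ^ (a j - 1)`. -/
noncomputable def ulsExponent {n m : ℕ} (hmn : m ≤ n) (a : Fin m → ℕ) (i : Fin m) : Fin n →₀ ℕ :=
  Finsupp.single (Fin.castLE hmn i) (a i) +
    ∑ j ∈ Finset.univ.filter (fun j : Fin m => j < i),
      Finsupp.single (Fin.castLE hmn j) (a j - 1)

section ULSAux

variable {K : Type*} [Field K] {n : ℕ} {I : Ideal (MvPolynomial (Fin n) K)}

/-- Monomial multiples of monomials of `I` lie in `I`. -/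
lemma uls_mem_of_le {g b : Fin n →₀ ℕ} (hle : g ≤ b)
    (hg : (monomial g (1 : K) : MvPolynomial (Fin n) K) ∈ I) :
    (monomial b (1 : K) : MvPolynomial (Fin n) K) ∈ I := by
  have h : (monomial b (1 : K) : MvPolynomial (Fin n) K)
      = monomial (b - g) (1 : K) * monomial g (1 : K) := by
    rw [monomial_mul, one_mul, tsub_add_cancel_of_le hle]
  rw [h]
  exact Ideal.mul_mem_left _ _ hg

lemma uls_descent : ∀ N : ℕ, ∀ b : Fin n →₀ ℕ, (∑ j, b j) ≤ N →
    (monomial b (1 : K) : MvPolynomial (Fin n) K) ∈ I →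
    ∃ g ∈ minGens I, g ≤ b := by
  intro N
  induction N with
  | zero =>
    intro b hsum hb
    refine ⟨b, ⟨hb, ?_⟩, le_rfl⟩
    intro j hj
    have : b j ≤ ∑ k, b k := Finset.single_le_sum (fun k _ => Nat.zero_le _) (Finset.mem_univ j)
    omega
  | succ N ih =>
    intro b hsum hb
    by_cases hmin : ∀ j : Fin n, b j ≠ 0 →
        (monomial (b - Finsupp.single j 1) (1 : K) : MvPolynomial (Fin n) K) ∉ I
    · exact ⟨b, ⟨hb, hmin⟩, le_rfl⟩
    · push_neg at hmin
      obtain ⟨j, hj, hmem⟩ := hmin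
      have hsum' : (∑ k, ((b - Finsupp.single j 1 : Fin n →₀ ℕ)) k) ≤ N := by
        have h2 : (∑ k, ((b - Finsupp.single j 1 : Fin n →₀ ℕ)) k)
            + (∑ k, (Finsupp.single j 1 : Fin n →₀ ℕ) k) = ∑ k, b k := by
          rw [← Finset.sum_add_distrib]
          refine Finset.sum_congr rfl fun k _ => ?_
          rw [Finsupp.tsub_apply]
          have : (Finsupp.single j 1 : Fin n →₀ ℕ) k ≤ b k := by
            rw [Finsupp.single_apply]
            split_ifs with h
            · subst h; omega
            · omega
          omega
        have h3 : (∑ k, (Finsupp.single j 1 : Fin n →₀ ℕ) k) = 1 := by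
          simp [Finsupp.single_apply]
        omega
      obtain ⟨g, hg, hle⟩ := ih _ hsum' hmem
      exact ⟨g, hg, hle.trans tsub_le_self⟩

lemma uls_mem_monomial_iff (b : Fin n →₀ ℕ) :
    (monomial b (1 : K) : MvPolynomial (Fin n) K) ∈ I ↔ ∃ g ∈ minGens I, g ≤ b :=
  ⟨fun h => uls_descent _ b le_rfl h, fun ⟨_, hg, hle⟩ => uls_mem_of_le hle hg.1⟩

lemma uls_antichain {g h : Fin n →₀ ℕ} (hg : g ∈ minGens I)
    (hh : h ∈ minGens I) (hle : g ≤ h) : g = h := by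
  have hle' := Finsupp.le_def.mp hle
  by_contra hne
  have hj : ∃ j, g j < h j := by
    by_contra hc
    push_neg at hc
    exact hne (Finsupp.ext fun j => le_antisymm (hle' j) (hc j))
  obtain ⟨j, hj⟩ := hj
  refine hh.2 j (by omega) (uls_mem_of_le ?_ hg.1)
  refine Finsupp.le_def.mpr fun k => ?_
  rw [Finsupp.tsub_apply, Finsupp.single_apply]
  split_ifs with hcond
  · subst hcond
    omega
  · have := hle' k
    omega

lemma uls_sub_add_single_apply (b : Fin n →₀ ℕ) (j i k : Fin n) :
    ((b - Finsupp.single j (b j) + Finsupp.single i 1 : Fin n →₀ ℕ)) k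
      = (if j = k then 0 else b k) + (if i = k then 1 else 0) := by
  rw [Finsupp.add_apply, Finsupp.tsub_apply, Finsupp.single_apply, Finsupp.single_apply]
  rcases eq_or_ne j k with rfl | hne
  · simp
  · rw [if_neg hne, if_neg hne, Nat.sub_zero]

lemma uls_exists_top (b : Fin n →₀ ℕ) {j : Fin n} (hj : b j ≠ 0) :
    ∃ jm, b jm ≠ 0 ∧ ∀ k, b k ≠ 0 → k ≤ jm := by
  have hne : b.support.Nonempty := ⟨j, Finsupp.mem_support_iff.2 hj⟩
  exact ⟨b.support.max' hne, Finsupp.mem_support_iff.1 (b.support.max'_mem hne),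
    fun k hk => Finset.le_max' _ _ (Finsupp.mem_support_iff.2 hk)⟩

/-- Condition (b). -/
def CondB (I : Ideal (MvPolynomial (Fin n) K)) : Prop :=
  ∀ b : Fin n →₀ ℕ, (monomial b (1 : K) : MvPolynomial (Fin n) K) ∈ I →
    ∀ jm : Fin n, b jm ≠ 0 → (∀ j : Fin n, b j ≠ 0 → j ≤ jm) →
      ∀ i : Fin n, i < jm →
        (monomial (b - Finsupp.single jm (b jm) + Finsupp.single i 1) (1 : K) :
          MvPolynomial (Fin n) K) ∈ I

/-- Condition (c). -/
def CondC (I : Ideal (MvPolynomial (Fin n) K)) : Prop :=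
  ∀ b : Fin n →₀ ℕ, (monomial b (1 : K) : MvPolynomial (Fin n) K) ∈ I →
    ∀ i j : Fin n, i < j → b j ≠ 0 →
      (monomial (b - Finsupp.single j (b j) + Finsupp.single i 1) (1 : K) :
        MvPolynomial (Fin n) K) ∈ I

lemma uls_condB_imp_condC (hB : CondB I) : CondC I := by
  suffices H : ∀ J : ℕ, ∀ b : Fin n →₀ ℕ,
      (monomial b (1 : K) : MvPolynomial (Fin n) K) ∈ I →
      (∀ k : Fin n, b k ≠ 0 → (k : ℕ) ≤ J) → ∀ i j : Fin n, i < j → b j ≠ 0 →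
      (monomial (b - Finsupp.single j (b j) + Finsupp.single i 1) (1 : K) :
        MvPolynomial (Fin n) K) ∈ I by
    intro b hb i j hij hj
    exact H n b hb (fun k _ => k.isLt.le) i j hij hj
  intro J
  induction J with
  | zero =>
    intro b hb hbd i j hij hj
    have h1 := hbd j hj
    have h2 : (i : ℕ) < (j : ℕ) := hij
    omega
  | succ J ih =>
    intro b hb hbd i j hij hj
    obtain ⟨jm, hjm, hjtop⟩ := uls_exists_top b hj
    rcases eq_or_ne j jm with rfl | hne
    · exact hB b hb j hjm hjtop i hij
    · have hjlt : j < jm := lt_of_le_of_ne (hjtop j hj) hne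
      have hw : (monomial (b - Finsupp.single jm (b jm) + Finsupp.single j 1) (1 : K) :
          MvPolynomial (Fin n) K) ∈ I := hB b hb jm hjm hjtop j hjlt
      set w := b - Finsupp.single jm (b jm) + Finsupp.single j 1 with hwdef
      have hwk : ∀ k, w k = (if jm = k then 0 else b k) + (if j = k then 1 else 0) :=
        fun k => uls_sub_add_single_apply b jm j k
      have hwbd : ∀ k : Fin n, w k ≠ 0 → (k : ℕ) ≤ J := by
        intro k hk
        rw [hwk k] at hk
        have hjmJ : (jm : ℕ) ≤ J + 1 := hbd jm hjm
        by_cases h1 : jm = k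
        · exfalso
          subst h1
          rw [if_pos rfl, if_neg (ne_of_lt hjlt)] at hk
          exact hk rfl
        · by_cases h2 : (k : ℕ) ≤ (jm : ℕ)
          · have h3 : (k : ℕ) ≠ (jm : ℕ) := fun hkk => h1 (Fin.ext hkk).symm
            omega
          · exfalso
            have hbk : b k = 0 := by
              by_contra hbk
              exact h2 (Fin.le_def.mp (hjtop k hbk))
            have hjk : j ≠ k := by
              intro hjk
              subst hjk
              exact h2 (Nat.le_of_lt (Fin.lt_def.mp hjlt))
            rw [if_neg h1, hbk, if_neg hjk] at hk
            exact hk rfl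
      have hwj : w j ≠ 0 := by
        rw [hwk j, if_pos rfl]
        omega
      have hc' := ih w hw hwbd i j hij hwj
      refine uls_mem_of_le ?_ hc'
      refine Finsupp.le_def.mpr fun k => ?_
      rw [uls_sub_add_single_apply w j i k, uls_sub_add_single_apply b j i k]
      apply Nat.add_le_add_right
      by_cases h1 : j = k
      · rw [if_pos h1, if_pos h1]
      · rw [if_neg h1, if_neg h1, hwk k, if_neg h1]
        by_cases h2 : jm = k
        · rw [if_pos h2]; exact Nat.zero_le _
        · rw [if_neg h2]; omega

lemma uls_cascade (hC : CondC I) : ∀ J : ℕ, ∀ b : Fin n →₀ ℕ,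
    (monomial b (1 : K) : MvPolynomial (Fin n) K) ∈ I →
    (∀ k : Fin n, b k ≠ 0 → (k : ℕ) ≤ J) →
    ∀ i : Fin n, (∃ k, i < k ∧ b k ≠ 0) →
    (monomial (Finsupp.filter (fun k => k ≤ i) b + Finsupp.single i 1) (1 : K) :
      MvPolynomial (Fin n) K) ∈ I := by
  intro J
  induction J with
  | zero =>
    rintro b hb hbd i ⟨k, hik, hk⟩
    have h1 := hbd k hk
    have h2 : (i : ℕ) < (k : ℕ) := hik
    omega
  | succ J ih =>
    rintro b hb hbd i ⟨k0, hik0, hk0⟩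
    obtain ⟨jm, hjm, hjtop⟩ := uls_exists_top b hk0
    have hijm : i < jm := lt_of_lt_of_le hik0 (hjtop k0 hk0)
    by_cases hJ : (jm : ℕ) ≤ J
    · exact ih b hb (fun k hk => le_trans (Fin.le_def.mp (hjtop k hk)) hJ) i ⟨k0, hik0, hk0⟩
    · by_cases hsucc : (jm : ℕ) = (i : ℕ) + 1
      · have hw := hC b hb i jm hijm hjm
        have heq : b - Finsupp.single jm (b jm) + Finsupp.single i 1
            = Finsupp.filter (fun k => k ≤ i) b + Finsupp.single i 1 := by
          ext k
          rw [uls_sub_add_single_apply, Finsupp.add_apply, Finsupp.filter_apply,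
            Finsupp.single_apply]
          by_cases h1 : jm = k
          · subst h1
            rw [if_pos rfl,
              if_neg (show ¬i = jm by
                intro hh
                have := congrArg Fin.val hh
                omega),
              if_neg (show ¬jm ≤ i by
                intro hh
                have := Fin.le_def.mp hh
                omega)]
          · rw [if_neg h1]
            by_cases h2 : k ≤ i
            · rw [if_pos h2]
            · have hbk : b k = 0 := by
                by_contra hbk
                have hkjm := Fin.le_def.mp (hjtop k hbk)
                have h2' : ¬ (k : ℕ) ≤ (i : ℕ) := fun hh => h2 (Fin.le_def.mpr hh)
                have : (k : ℕ) = (jm : ℕ) := by omega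
                exact h1 (Fin.ext this).symm
              rw [if_neg h2, hbk]
        rw [← heq]
        exact hw
      · have hjm1 : (jm : ℕ) - 1 < n := by
          have := jm.isLt
          omega
        set j' : Fin n := ⟨(jm : ℕ) - 1, hjm1⟩ with hj'def
        have hijmval : (i : ℕ) < (jm : ℕ) := hijm
        have hij' : i < j' := by
          rw [Fin.lt_def]
          show (i : ℕ) < (jm : ℕ) - 1
          omega
        have hj'jm : j' < jm := by
          rw [Fin.lt_def]
          show (jm : ℕ) - 1 < (jm : ℕ)
          omega
        have hw := hC b hb j' jm hj'jm hjm
        set w := b - Finsupp.single jm (b jm) + Finsupp.single j' 1 with hwdef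
        have hwk : ∀ k, w k = (if jm = k then 0 else b k) + (if j' = k then 1 else 0) :=
          fun k => uls_sub_add_single_apply b jm j' k
        have hjmJ : (jm : ℕ) ≤ J + 1 := hbd jm hjm
        have hwbd : ∀ k : Fin n, w k ≠ 0 → (k : ℕ) ≤ J := by
          intro k hk
          rw [hwk k] at hk
          by_cases h1 : jm = k
          · exfalso
            subst h1
            rw [if_pos rfl, if_neg (ne_of_lt hj'jm)] at hk
            exact hk rfl
          · by_cases h3 : j' = k
            · subst h3
              show (jm : ℕ) - 1 ≤ J
              omega
            · have hbk : (k : ℕ) ≤ (jm : ℕ) := by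
                by_contra hgt
                have hbk : b k = 0 := by
                  by_contra hbk
                  exact hgt (Fin.le_def.mp (hjtop k hbk))
                rw [if_neg h1, hbk, if_neg h3] at hk
                exact hk rfl
              have h4 : (k : ℕ) ≠ (jm : ℕ) := fun hkk => h1 (Fin.ext hkk).symm
              have h5 : (k : ℕ) ≠ (jm : ℕ) - 1 := by
                intro hkk
                exact h3 (Fin.ext hkk).symm
              omega
        have hwj' : w j' ≠ 0 := by
          rw [hwk j', if_pos rfl]
          omega
        have hres := ih w hw hwbd i ⟨j', hij', hwj'⟩
        have hfeq : Finsupp.filter (fun k => k ≤ i) w = Finsupp.filter (fun k => k ≤ i) b := by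
          ext k
          rw [Finsupp.filter_apply, Finsupp.filter_apply]
          by_cases h : k ≤ i
          · have hki : (k : ℕ) ≤ (i : ℕ) := h
            rw [if_pos h, if_pos h, hwk k, if_neg (by
                intro hh
                have : (jm : ℕ) = (k : ℕ) := congrArg Fin.val hh
                omega),
              if_neg (by
                intro hh
                have : (jm : ℕ) - 1 = (k : ℕ) := congrArg Fin.val hh
                omega)]
            omega
          · rw [if_neg h, if_neg h]
        rwa [hfeq] at hres

lemma uls_exists_gen_top (hC : CondC I) {v : Fin n →₀ ℕ} (hv : v ∈ minGens I)
    {i j : Fin n} (hij : i < j) (hvj : v j ≠ 0) :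
    ∃ g ∈ minGens I, g i = v i + 1 ∧ (∀ k, i < k → g k = 0) ∧ ∀ k, k < i → g k ≤ v k := by
  have hW := uls_cascade hC n v hv.1 (fun k _ => k.isLt.le) i ⟨j, hij, hvj⟩
  obtain ⟨g, hg, hle⟩ := (uls_mem_monomial_iff _).1 hW
  have hle' := Finsupp.le_def.mp hle
  have hWk : ∀ k, ((Finsupp.filter (fun k => k ≤ i) v + Finsupp.single i 1 : Fin n →₀ ℕ)) k
      = (if k ≤ i then v k else 0) + (if i = k then 1 else 0) := by
    intro k
    rw [Finsupp.add_apply, Finsupp.filter_apply, Finsupp.single_apply]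
  have hgi : g i ≤ v i + 1 := by
    have := hle' i
    rw [hWk i, if_pos le_rfl, if_pos rfl] at this
    exact this
  have hgk0 : ∀ k, i < k → g k = 0 := by
    intro k hk
    have := hle' k
    rw [hWk k, if_neg (not_le.mpr hk), if_neg (ne_of_lt hk)] at this
    omega
  have hgklt : ∀ k, k < i → g k ≤ v k := by
    intro k hk
    have := hle' k
    rw [hWk k, if_pos (le_of_lt hk), if_neg (ne_of_gt hk)] at this
    omega
  rcases Nat.lt_or_ge (g i) (v i + 1) with hlt | hge
  · exfalso
    have hgle : g ≤ v := by
      refine Finsupp.le_def.mpr fun k => ?_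
      rcases lt_trichotomy k i with h | rfl | h
      · exact hgklt k h
      · omega
      · rw [hgk0 k h]; exact Nat.zero_le _
    have heq := uls_antichain hg hv hgle
    subst heq
    exact hvj (hgk0 j hij)
  · exact ⟨g, hg, le_antisymm hgi hge, hgk0, hgklt⟩

lemma uls_unique_top (hC : CondC I) : ∀ N : ℕ, ∀ i : Fin n, (i : ℕ) < N →
    ∀ g h : Fin n →₀ ℕ, g ∈ minGens I → h ∈ minGens I →
    g i ≠ 0 → (∀ k, g k ≠ 0 → k ≤ i) → h i ≠ 0 → (∀ k, h k ≠ 0 → k ≤ i) → g = h := by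
  intro N
  induction N with
  | zero => intro i hi; omega
  | succ N ih =>
    intro i hi g h hg hh hgi hgtop hhi hhtop
    have hlow : ∀ k : Fin n, k < i → g k = h k := by
      intro k hk
      obtain ⟨f, hf, hfi, hf0, _⟩ := uls_exists_gen_top hC hg hk hgi
      obtain ⟨f', hf', hfi', hf0', _⟩ := uls_exists_gen_top hC hh hk hhi
      have hkval : (k : ℕ) < (i : ℕ) := hk
      have hfe : f = f' := ih k (by omega) f f' hf hf'
        (by rw [hfi]; omega)
        (fun k' hk' => by
          by_contra hgt
          exact hk' (hf0 k' (not_le.mp hgt)))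
        (by rw [hfi']; omega)
        (fun k' hk' => by
          by_contra hgt
          exact hk' (hf0' k' (not_le.mp hgt)))
      have : g k + 1 = h k + 1 := by rw [← hfi, ← hfi', hfe]
      omega
    rcases le_total (g i) (h i) with hle | hle
    · refine uls_antichain hg hh (Finsupp.le_def.mpr fun k => ?_)
      rcases lt_trichotomy k i with h1 | rfl | h1
      · rw [hlow k h1]
      · exact hle
      · have hz : g k = 0 := by
          by_contra hk
          exact absurd (hgtop k hk) (not_le.mpr h1)
        rw [hz]
        exact Nat.zero_le _
    · refine (uls_antichain hh hg (Finsupp.le_def.mpr fun k => ?_)).symm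
      rcases lt_trichotomy k i with h1 | rfl | h1
      · rw [hlow k h1]
      · exact hle
      · have hz : h k = 0 := by
          by_contra hk
          exact absurd (hhtop k hk) (not_le.mpr h1)
        rw [hz]
        exact Nat.zero_le _

end ULSAux

section ULSApply

variable {n m : ℕ} (hmn : m ≤ n) (a : Fin m → ℕ)

lemma ulsExponent_apply (i : Fin m) (k : Fin n) :
    ulsExponent hmn a i k = (if Fin.castLE hmn i = k then a i else 0)
      + ∑ j ∈ Finset.univ.filter (fun j : Fin m => j < i),
          (if Fin.castLE hmn j = k then a j - 1 else 0) := by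
  rw [ulsExponent, Finsupp.add_apply, Finsupp.single_apply, Finsupp.finset_sum_apply]
  congr 1
  exact Finset.sum_congr rfl fun j _ => Finsupp.single_apply

lemma ulsExponent_apply_self (i : Fin m) :
    ulsExponent hmn a i (Fin.castLE hmn i) = a i := by
  rw [ulsExponent_apply, if_pos rfl]
  rw [Finset.sum_eq_zero, add_zero]
  intro j hj
  rw [Finset.mem_filter] at hj
  refine if_neg fun he => ?_
  have h1 := congrArg Fin.val he
  rw [Fin.coe_castLE, Fin.coe_castLE] at h1
  have h2 : (j : ℕ) < (i : ℕ) := hj.2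
  omega

lemma ulsExponent_apply_lt (i j : Fin m) (h : j < i) :
    ulsExponent hmn a i (Fin.castLE hmn j) = a j - 1 := by
  have hji : (j : ℕ) < (i : ℕ) := h
  rw [ulsExponent_apply, if_neg (fun he => by
    have h1 := congrArg Fin.val he
    rw [Fin.coe_castLE, Fin.coe_castLE] at h1
    omega), zero_add]
  have hmem : j ∈ Finset.univ.filter (fun j' : Fin m => j' < i) :=
    Finset.mem_filter.2 ⟨Finset.mem_univ j, h⟩
  rw [Finset.sum_eq_single_of_mem j hmem (fun j' _ hne => if_neg fun he => hne (by
      have h1 := congrArg Fin.val he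
      rw [Fin.coe_castLE, Fin.coe_castLE] at h1
      exact Fin.ext h1)), if_pos rfl]

lemma ulsExponent_apply_gt (i : Fin m) (k : Fin n) (h : (i : ℕ) < (k : ℕ)) :
    ulsExponent hmn a i k = 0 := by
  rw [ulsExponent_apply, if_neg (fun he => by
    have h1 := congrArg Fin.val he
    rw [Fin.coe_castLE] at h1
    omega), zero_add]
  refine Finset.sum_eq_zero fun j hj => ?_
  rw [Finset.mem_filter] at hj
  refine if_neg fun he => ?_
  have h1 := congrArg Fin.val he
  rw [Fin.coe_castLE] at h1
  have h2 : (j : ℕ) < (i : ℕ) := hj.2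
  omega

end ULSApply

/-- Characterizations of universal lexsegment ideals: for a nonzero proper monomial
ideal `I` whose minimal monomial generating set has cardinality `m`, the following are
equivalent:
(a) there are positive integers `a_1, …, a_m` with
    `G_min(I) = {x_i ^ a_i * ∏_{j<i} x_j ^ (a_j - 1) : i = 1, …, m}`;
(b) for every monomial `u = ∏ x_j ^ b_j ∈ I` with largest variable `x_{m(u)}` dividing
    `u`, one has `x_i * (u / x_{m(u)} ^ b_{m(u)}) ∈ I` for every `i < m(u)`;
(c) for every monomial `u = ∏ x_j ^ b_j ∈ I` and all `i < j` with `b_j > 0`, one has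
    `x_i * (u / x_j ^ b_j) ∈ I`. -/
theorem universal_lexsegment_tfae {K : Type*} [Field K] {n m : ℕ}
    (I : Ideal (MvPolynomial (Fin n) K)) (hmon : IsMonomialIdeal I)
    (hbot : I ≠ ⊥) (htop : I ≠ ⊤) (hcard : (minGens (K := K) I).ncard = m) :
    ((∃ (hmn : m ≤ n) (a : Fin m → ℕ), (∀ i, 0 < a i) ∧
        minGens (K := K) I = Set.range (ulsExponent hmn a)) ↔
      (∀ b : Fin n →₀ ℕ, (monomial b (1 : K) : MvPolynomial (Fin n) K) ∈ I →
        ∀ jm : Fin n, b jm ≠ 0 → (∀ j : Fin n, b j ≠ 0 → j ≤ jm) →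
          ∀ i : Fin n, i < jm →
            (monomial (b - Finsupp.single jm (b jm) + Finsupp.single i 1) (1 : K) :
              MvPolynomial (Fin n) K) ∈ I)) ∧
    ((∀ b : Fin n →₀ ℕ, (monomial b (1 : K) : MvPolynomial (Fin n) K) ∈ I →
        ∀ jm : Fin n, b jm ≠ 0 → (∀ j : Fin n, b j ≠ 0 → j ≤ jm) →
          ∀ i : Fin n, i < jm →
            (monomial (b - Finsupp.single jm (b jm) + Finsupp.single i 1) (1 : K) :
              MvPolynomial (Fin n) K) ∈ I) ↔
      (∀ b : Fin n →₀ ℕ, (monomial b (1 : K) : MvPolynomial (Fin n) K) ∈ I →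
        ∀ i j : Fin n, i < j → b j ≠ 0 →
          (monomial (b - Finsupp.single j (b j) + Finsupp.single i 1) (1 : K) :
            MvPolynomial (Fin n) K) ∈ I)) := by
  constructor
  · constructor
    · -- (a) → (b)
      rintro ⟨hmn, a, ha, hEq⟩
      intro b hb jm hjm hjtop i hijm
      obtain ⟨g, hg, hle⟩ := (uls_mem_monomial_iff b).1 hb
      rw [hEq] at hg
      obtain ⟨iG, rfl⟩ := hg
      have hle' := Finsupp.le_def.mp hle
      have hmemu : ∀ i' : Fin m, (monomial (ulsExponent hmn a i') (1 : K) :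
          MvPolynomial (Fin n) K) ∈ I := by
        intro i'
        have : ulsExponent hmn a i' ∈ minGens (K := K) I := by
          rw [hEq]; exact ⟨i', rfl⟩
        exact this.1
      have hbiG : (Fin.castLE hmn iG : Fin n) ≤ jm := by
        refine hjtop _ ?_
        have h1 := hle' (Fin.castLE hmn iG)
        rw [ulsExponent_apply_self] at h1
        have := ha iG
        omega
      rcases lt_or_eq_of_le hbiG with hlt | heq
      · refine uls_mem_of_le (g := ulsExponent hmn a iG) ?_ (hmemu iG)
        refine Finsupp.le_def.mpr fun k => ?_
        rw [uls_sub_add_single_apply]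
        by_cases h1 : jm = k
        · subst h1
          rw [ulsExponent_apply_gt hmn a iG jm (by exact hlt)]
          exact Nat.zero_le _
        · rw [if_neg h1]
          exact le_trans (hle' k) (Nat.le_add_right _ _)
      · -- castLE iG = jm
        have hivlt : (i : ℕ) < (iG : ℕ) := by
          have h1 : (i : ℕ) < (jm : ℕ) := hijm
          have h2 : (jm : ℕ) = (iG : ℕ) := by rw [← heq]; rfl
          omega
        have hj0m : (i : ℕ) < m := lt_trans hivlt iG.isLt
        set j0 : Fin m := ⟨(i : ℕ), hj0m⟩ with hj0def
        have hcj0 : Fin.castLE hmn j0 = i := Fin.ext rfl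
        have hj0iG : j0 < iG := by
          rw [Fin.lt_def]
          exact hivlt
        refine uls_mem_of_le (g := ulsExponent hmn a j0) ?_ (hmemu j0)
        refine Finsupp.le_def.mpr fun k => ?_
        rw [uls_sub_add_single_apply]
        by_cases h1 : i = k
        · subst h1
          rw [if_neg (fun hh => by
            have h2 : (jm : ℕ) = (i : ℕ) := congrArg Fin.val hh
            have h3 : (i : ℕ) < (jm : ℕ) := hijm
            omega), if_pos rfl]
          rw [← hcj0, ulsExponent_apply_self]
          have h4 := hle' (Fin.castLE hmn j0)
          rw [ulsExponent_apply_lt hmn a iG j0 hj0iG] at h4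
          have := ha j0
          omega
        · rcases lt_trichotomy (k : ℕ) ((i : ℕ)) with h2 | h2 | h2
          · have hkm : (k : ℕ) < m := lt_trans h2 hj0m
            set k' : Fin m := ⟨(k : ℕ), hkm⟩ with hk'def
            have hck' : Fin.castLE hmn k' = k := Fin.ext rfl
            have hk'j0 : k' < j0 := by rw [Fin.lt_def]; exact h2
            have hijmN : (i : ℕ) < (jm : ℕ) := hijm
            have h4 := hle' k
            have h5 : ulsExponent hmn a iG k = a k' - 1 := by
              rw [← hck']; exact ulsExponent_apply_lt hmn a iG k' (lt_trans hk'j0 hj0iG)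
            have h6 : ulsExponent hmn a j0 k = a k' - 1 := by
              rw [← hck']; exact ulsExponent_apply_lt hmn a j0 k' hk'j0
            rw [h6]
            rw [h5] at h4
            have hnejm : ¬jm = k := by
              intro hh
              have := congrArg Fin.val hh
              omega
            have hnei : (if i = k then (1 : ℕ) else 0) = 0 := by
              rw [if_neg]
              intro hh
              have := congrArg Fin.val hh
              omega
            rw [if_neg hnejm, hnei]
            omega
          · exact absurd (Fin.ext h2 : k = i) (fun hh => h1 hh.symm)
          · rw [ulsExponent_apply_gt hmn a j0 k (by exact h2)]
            exact Nat.zero_le _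
    · -- (b) → (a)
      intro hB
      have hC : CondC I := uls_condB_imp_condC hB
      have hne0 : ∀ v ∈ minGens (K := K) I, v ≠ 0 := by
        intro v hv h0
        apply htop
        rw [Ideal.eq_top_iff_one]
        have hm := hv.1
        rw [h0] at hm
        rwa [monomial_zero', C_1] at hm
      have hnonempty : (minGens (K := K) I).Nonempty := by
        obtain ⟨G, hG⟩ := hmon
        have hGne : G.Nonempty := by
          by_contra hGe
          rw [Set.not_nonempty_iff_eq_empty] at hGe
          apply hbot
          rw [hG, hGe]
          simp
        obtain ⟨g0, hg0⟩ := hGne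
        have hmem : (monomial g0 (1 : K) : MvPolynomial (Fin n) K) ∈ I := by
          rw [hG]
          exact Ideal.subset_span ⟨g0, hg0, rfl⟩
        obtain ⟨g, hg, _⟩ := (uls_mem_monomial_iff g0).1 hmem
        exact ⟨g, hg⟩
      have hsupp : ∀ v ∈ minGens (K := K) I, v.support.Nonempty :=
        fun v hv => Finsupp.support_nonempty_iff.2 (hne0 v hv)
      obtain ⟨v0, hv0⟩ := hnonempty
      obtain ⟨i0, _⟩ := hsupp v0 hv0
      set F : (Fin n →₀ ℕ) → Fin n :=
        fun v => if hv : v.support.Nonempty then v.support.max' hv else i0 with hFdef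
      have hFtop : ∀ v ∈ minGens (K := K) I, v (F v) ≠ 0 ∧ ∀ k, v k ≠ 0 → k ≤ F v := by
        intro v hv
        have hFv : F v = v.support.max' (hsupp v hv) := by
          rw [hFdef]
          exact dif_pos (hsupp v hv)
        rw [hFv]
        exact ⟨Finsupp.mem_support_iff.1 (Finset.max'_mem _ _),
          fun k hk => Finset.le_max' _ _ (Finsupp.mem_support_iff.2 hk)⟩
      have hinj : Set.InjOn F (minGens (K := K) I) := by
        intro g hg h hh hgh
        exact uls_unique_top hC n (F g) (F g).isLt g h hg hh (hFtop g hg).1 (hFtop g hg).2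
          (hgh ▸ (hFtop h hh).1) (hgh ▸ (hFtop h hh).2)
      set T : Set (Fin n) := F '' minGens (K := K) I with hTdef
      have hTcard : T.ncard = m := by
        rw [hTdef, Set.ncard_image_of_injOn hinj, hcard]
      have hdc : ∀ j ∈ T, ∀ i : Fin n, i < j → i ∈ T := by
        rintro j ⟨v, hv, rfl⟩ i hij
        obtain ⟨g, hg, hgi, hg0, _⟩ := uls_exists_gen_top hC hv hij (hFtop v hv).1
        refine ⟨g, hg, ?_⟩
        have h1 : g (F g) ≠ 0 := (hFtop g hg).1
        have h2 : g i ≠ 0 := by rw [hgi]; omega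
        have h3 : F g ≤ i := by
          by_contra hgt
          exact h1 (hg0 _ (not_le.mp hgt))
        exact le_antisymm h3 ((hFtop g hg).2 i h2)
      have hTiff : ∀ k : Fin n, k ∈ T ↔ (k : ℕ) < m := by
        intro k
        constructor
        · intro hk
          have hsub : Set.Iic k ⊆ T := by
            intro j hj
            rcases lt_or_eq_of_le (Set.mem_Iic.mp hj) with h | rfl
            · exact hdc k hk j h
            · exact hk
          have hle := Set.ncard_le_ncard hsub (Set.toFinite T)
          have hIic : (Set.Iic k).ncard = (k : ℕ) + 1 := by
            rw [← Finset.coe_Iic, Set.ncard_coe_finset, Fin.card_Iic]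
          omega
        · intro hk
          by_contra hkT
          have hsub : T ⊆ Set.Iio k := by
            intro j hj
            by_contra hjk
            rcases lt_or_eq_of_le (not_lt.mp hjk : k ≤ j) with h | rfl
            · exact hkT (hdc j hj k h)
            · exact hkT hj
          have hle := Set.ncard_le_ncard hsub (Set.toFinite _)
          rw [hTcard, ← Finset.coe_Iio, Set.ncard_coe_finset, Fin.card_Iio] at hle
          omega
      have hmn : m ≤ n := by
        have hle := Set.ncard_le_ncard (Set.subset_univ T) (Set.toFinite _)
        rwa [hTcard, Set.ncard_univ, Nat.card_eq_fintype_card, Fintype.card_fin] at hle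
      have hgen : ∀ i : Fin m, ∃ v, v ∈ minGens (K := K) I ∧ F v = Fin.castLE hmn i := by
        intro i
        have hmem : (Fin.castLE hmn i : Fin n) ∈ T := (hTiff _).2 (by
          show (i : ℕ) < m
          exact i.isLt)
        obtain ⟨v, hv, hveq⟩ := hmem
        exact ⟨v, hv, hveq⟩
      choose g hg hgF using hgen
      have hgtop : ∀ i : Fin m, g i (Fin.castLE hmn i) ≠ 0 ∧
          ∀ k, g i k ≠ 0 → k ≤ Fin.castLE hmn i := by
        intro i
        have := hFtop (g i) (hg i)
        rwa [hgF i] at this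
      set a : Fin m → ℕ := fun i => g i (Fin.castLE hmn i) with hadef
      have hapos : ∀ i, 0 < a i := fun i => Nat.pos_of_ne_zero (hgtop i).1
      have hcoh : ∀ v ∈ minGens (K := K) I, ∀ iv : Fin n, v iv ≠ 0 →
          (∀ k, v k ≠ 0 → k ≤ iv) →
          ∀ j : Fin m, Fin.castLE hmn j < iv → v (Fin.castLE hmn j) = a j - 1 := by
        intro v hv iv hiv hvtop j hj
        obtain ⟨f, hf, hfi, hf0, _⟩ := uls_exists_gen_top hC hv hj hiv
        have hfe : f = g j := uls_unique_top hC n (Fin.castLE hmn j) (Fin.castLE hmn j).isLt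
          f (g j) hf (hg j)
          (by rw [hfi]; omega)
          (fun k hk => by
            by_contra hgt
            exact hk (hf0 k (not_le.mp hgt)))
          (hgtop j).1 (hgtop j).2
        have : a j = v (Fin.castLE hmn j) + 1 := by
          rw [hadef]
          show g j (Fin.castLE hmn j) = _
          rw [← hfe, hfi]
        omega
      have hgu : ∀ i : Fin m, g i = ulsExponent hmn a i := by
        intro i
        ext k
        rcases lt_trichotomy (k : ℕ) (i : ℕ) with hlt | heq | hgt
        · have hkm : (k : ℕ) < m := lt_trans hlt i.isLt
          set j : Fin m := ⟨(k : ℕ), hkm⟩ with hjdef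
          have hcj : Fin.castLE hmn j = k := Fin.ext rfl
          have hji : j < i := by rw [Fin.lt_def]; exact hlt
          have hcast : Fin.castLE hmn j < Fin.castLE hmn i := by
            rw [Fin.lt_def]
            exact hlt
          rw [← hcj, hcoh (g i) (hg i) (Fin.castLE hmn i) (hgtop i).1 (hgtop i).2 j hcast,
            ulsExponent_apply_lt hmn a i j hji]
        · have hkeq : k = Fin.castLE hmn i := Fin.ext heq
          subst hkeq
          rw [ulsExponent_apply_self]
        · rw [ulsExponent_apply_gt hmn a i k hgt]
          by_contra hne
          have h1 := Fin.le_def.mp ((hgtop i).2 k hne)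
          rw [Fin.coe_castLE] at h1
          omega
      refine ⟨hmn, a, hapos, Set.Subset.antisymm ?_ ?_⟩
      · intro v hv
        have hvm : ((F v : Fin n) : ℕ) < m := (hTiff (F v)).1 ⟨v, hv, rfl⟩
        set i : Fin m := ⟨((F v : Fin n) : ℕ), hvm⟩ with hidef
        have hci : Fin.castLE hmn i = F v := Fin.ext rfl
        have hveq : v = g i := uls_unique_top hC n (F v) (F v).isLt v (g i) hv (hg i)
          (hFtop v hv).1 (hFtop v hv).2 (hci ▸ (hgtop i).1) (hci ▸ (hgtop i).2)
        exact ⟨i, ((hgu i).symm.trans hveq.symm)⟩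
      · rintro v ⟨i, rfl⟩
        rw [← hgu i]
        exact hg i
  · constructor
    · intro hB
      exact uls_condB_imp_condC hB
    · intro hC b hb jm h1 h2 i h3
      exact hC b hb i jm h3 h1
end
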